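/- Structure theorem for the lex-optimal received resource vector: a vector r ∈ A is lex-optimal if and only if the following hold (write K = K(r), v_k = v_k(r), L_k = L_k(r)). If K = 1 then v_1 = 1. If K ≥ 2 then for every k = 1,…,⌊K/2⌋: (1) L_k is an independent set in the induced subgraph G_{Q_k}; (2) L_{K−k+1} equals the set of neighbors of L_k within G_{Q_k}; (3) v_k · v_{K−k+1} = 1; (4) Σ_{i∈L_k} r_i = Σ_{i∈L_{K−k+1}} D_i; and (5) if K is odd, then v_{⌈K/2⌉} = 1. -/

import Mathlib

open Finset
open scoped Classical

noncomputable section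

namespace SharingEcon

variable {V : Type*} [Fintype V] [DecidableEq V]

/-- The set of neighbors of a set of nodes: `N_S = ⋃ i ∈ S, N_i`. -/
def nbrs (G : SimpleGraph V) [DecidableRel G.Adj] (S : Finset V) : Finset V :=
  S.biUnion fun i => G.neighborFinset i

/-- The set function `f(S) = ∑_{j ∈ N_S} D_j`. -/
def fS (G : SimpleGraph V) [DecidableRel G.Adj] (D : V → ℝ) (S : Finset V) : ℝ :=
  ∑ j ∈ nbrs G S, D j

/-- The polymatroid polyhedron `A` of a set function `f`. -/
def polyA (f : Finset V → ℝ) : Set (V → ℝ) :=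
  {r | (∀ i, 0 ≤ r i) ∧ ∀ S : Finset V, ∑ i ∈ S, r i ≤ f S}

/-- The base `A₀` of the polymatroid. -/
def polyBase (f : Finset V → ℝ) : Set (V → ℝ) :=
  {r | r ∈ polyA f ∧ ∑ i, r i = f Finset.univ}

/-- The coordinates of a vector sorted in nondecreasing order. -/
def sortedVec (x : V → ℝ) : List ℝ :=
  (Finset.univ.val.map x).sort (· ≤ ·)

/-- `x` is lexicographically at least `y` (comparing sorted coordinate vectors). -/
def lexGE (x y : V → ℝ) : Prop :=
  sortedVec x = sortedVec y ∨
    ∃ k : ℕ, (∀ j < k, (sortedVec x).getD j 0 = (sortedVec y).getD j 0) ∧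
      (sortedVec y).getD k 0 < (sortedVec x).getD k 0

/-- `r` is lexicographically optimal in `A` for the sharing-ratio vectors `(r i / D i)`. -/
def LexOptimal (A : Set (V → ℝ)) (D : V → ℝ) (r : V → ℝ) : Prop :=
  r ∈ A ∧ ∀ r' ∈ A, lexGE (fun i => r i / D i) (fun i => r' i / D i)

/-- The sharing ratio of node `i`. -/
def ratio (D r : V → ℝ) (i : V) : ℝ := r i / D i

/-- The distinct values of the sharing ratios, sorted increasingly. -/
def vals (D r : V → ℝ) : List ℝ :=
  (Finset.univ.image (ratio D r)).sort (· ≤ ·)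

/-- The number `K(r)` of distinct sharing-ratio values. -/
def numLevels (D r : V → ℝ) : ℕ := (vals D r).length

/-- The `k`-th smallest distinct ratio value `v_k(r)` (1-indexed). -/
def v (D r : V → ℝ) (k : ℕ) : ℝ := (vals D r).getD (k - 1) 0

/-- The `k`-th level set `L_k(r)` (1-indexed). -/
def level (D r : V → ℝ) (k : ℕ) : Finset V :=
  Finset.univ.filter fun i => ratio D r i = v D r k

end SharingEcon

namespace SharingEcon

/-- `Q_k(r) = N − ∪_{m=1}^{k−1}( L_m(r) ∪ L_{K−m+1}(r) )`. -/
def Qset {V : Type*} [Fintype V] [DecidableEq V] (D r : V → ℝ) (k : ℕ) : Finset V :=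
  Finset.univ \
    (Finset.Icc 1 (k - 1)).biUnion fun m => level D r m ∪ level D r (numLevels D r - m + 1)

end SharingEcon
set_option linter.unusedSectionVars false

namespace SharingEcon

variable {V : Type*} [Fintype V] [DecidableEq V]

section Levels

variable (D r : V → ℝ)

/-- The level index of a node (1-indexed). -/
def lvl (i : V) : ℕ := (vals D r).idxOf (ratio D r i) + 1

variable {D r}

lemma ratio_mem_vals (i : V) : ratio D r i ∈ vals D r := by
  rw [vals, Finset.mem_sort]
  exact Finset.mem_image_of_mem _ (Finset.mem_univ i)

lemma numLevels_pos [Nonempty V] : 1 ≤ numLevels D r := by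
  have := ratio_mem_vals (D := D) (r := r) (Classical.arbitrary V)
  have : vals D r ≠ [] := by intro h; rw [h] at this; simp at this
  have h2 := List.length_pos_iff.2 this
  simp only [numLevels]
  omega

lemma one_le_lvl (i : V) : 1 ≤ lvl D r i := by simp [lvl]

lemma lvl_le (i : V) : lvl D r i ≤ numLevels D r := by
  have h := List.idxOf_lt_length_iff.2 (ratio_mem_vals (D := D) (r := r) i)
  simp only [lvl, numLevels]; omega

lemma v_eq_get {k : ℕ} (h1 : 1 ≤ k) (h2 : k ≤ numLevels D r) :
    v D r k = (vals D r).get ⟨k - 1, by simp only [numLevels] at h2; omega⟩ := by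
  rw [v]
  exact List.getD_eq_getElem _ _ _

lemma v_lvl_eq_ratio (i : V) : v D r (lvl D r i) = ratio D r i := by
  have hm := ratio_mem_vals (D := D) (r := r) i
  have h := List.idxOf_lt_length_iff.2 hm
  rw [v_eq_get (by simp [lvl]) (lvl_le i)]
  simp only [lvl, Nat.add_sub_cancel]
  simp only [List.get_eq_getElem]
  exact List.getElem_idxOf h

lemma v_lt_v {a b : ℕ} (h1 : 1 ≤ a) (hab : a < b) (h2 : b ≤ numLevels D r) :
    v D r a < v D r b := by
  rw [v_eq_get h1 (le_trans (le_of_lt hab) h2), v_eq_get (by omega) h2]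
  exact (Finset.sortedLT_sort _).strictMono_get (Fin.mk_lt_mk.2 (by omega))

lemma v_le_v {a b : ℕ} (h1 : 1 ≤ a) (hab : a ≤ b) (h2 : b ≤ numLevels D r) :
    v D r a ≤ v D r b := by
  rcases eq_or_lt_of_le hab with h | h
  · subst h; exact le_refl _
  · exact le_of_lt (v_lt_v h1 h h2)

lemma v_inj {a b : ℕ} (h1a : 1 ≤ a) (h2a : a ≤ numLevels D r)
    (h1b : 1 ≤ b) (h2b : b ≤ numLevels D r) (h : v D r a = v D r b) : a = b := by
  by_contra hne
  rcases Nat.lt_or_ge a b with hl | hg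
  · exact absurd h (ne_of_lt (v_lt_v h1a hl h2b))
  · have : b < a := by omega
    exact absurd h.symm (ne_of_lt (v_lt_v h1b this h2a))

lemma ratio_le_iff_lvl_le {i : V} {k : ℕ} (h1 : 1 ≤ k) (h2 : k ≤ numLevels D r) :
    ratio D r i ≤ v D r k ↔ lvl D r i ≤ k := by
  constructor
  · intro h
    by_contra hk
    push_neg at hk
    have := v_lt_v h1 hk (lvl_le i)
    rw [v_lvl_eq_ratio] at this
    linarith
  · intro h
    calc ratio D r i = v D r (lvl D r i) := (v_lvl_eq_ratio i).symm
    _ ≤ v D r k := v_le_v (one_le_lvl i) h h2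

lemma mem_level_iff {i : V} {k : ℕ} : i ∈ level D r k ↔ ratio D r i = v D r k := by
  simp [level]

lemma mem_level_iff_lvl {i : V} {k : ℕ} (h1 : 1 ≤ k) (h2 : k ≤ numLevels D r) :
    i ∈ level D r k ↔ lvl D r i = k := by
  rw [mem_level_iff]
  constructor
  · intro h
    exact v_inj (one_le_lvl i) (lvl_le i) h1 h2 (by rw [v_lvl_eq_ratio, h])
  · intro h
    rw [← h, v_lvl_eq_ratio]

lemma mem_level_lvl (i : V) : i ∈ level D r (lvl D r i) := by
  rw [mem_level_iff, v_lvl_eq_ratio]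

lemma level_nonempty {k : ℕ} (h1 : 1 ≤ k) (h2 : k ≤ numLevels D r) :
    (level D r k).Nonempty := by
  have hmem : v D r k ∈ vals D r := by
    rw [v_eq_get h1 h2]
    exact List.get_mem _ _
  rw [vals, Finset.mem_sort] at hmem
  obtain ⟨i, -, hi⟩ := Finset.mem_image.1 hmem
  exact ⟨i, mem_level_iff.2 hi⟩

end Levels

end SharingEcon
namespace SharingEcon

section CountLists

/-- Number of coordinates of `x` that are `≤ c`. -/
def cnt {V : Type*} [Fintype V] (x : V → ℝ) (c : ℝ) : ℕ :=
  (Finset.univ.filter (fun i => x i ≤ c)).card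

variable {V : Type*} [Fintype V]

lemma sortedVec_sorted (x : V → ℝ) : (sortedVec x).Pairwise (· ≤ ·) :=
  Multiset.pairwise_sort _ _

lemma sortedVec_length (x : V → ℝ) : (sortedVec x).length = Fintype.card V := by
  simp [sortedVec]

lemma cnt_le_card (x : V → ℝ) (c : ℝ) : cnt x c ≤ Fintype.card V := by
  classical
  simpa [cnt] using Finset.card_filter_le Finset.univ (fun i => x i ≤ c)

lemma cnt_eq_countP (x : V → ℝ) (c : ℝ) :
    cnt x c = (sortedVec x).countP (fun a => decide (a ≤ c)) := by
  classical
  have h1 : ((sortedVec x : List ℝ) : Multiset ℝ) = Finset.univ.val.map x :=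
    Multiset.sort_eq _ _
  have h2 : Multiset.countP (fun a => decide (a ≤ c))
      ((sortedVec x : List ℝ) : Multiset ℝ) =
      Multiset.countP (fun a => decide (a ≤ c)) (Finset.univ.val.map x) := by
    rw [h1]
  rw [Multiset.coe_countP] at h2
  have h2' : List.countP (fun a => decide (a ≤ c)) (sortedVec x) =
      Multiset.countP (fun a => decide (a ≤ c)) (Finset.univ.val.map x) := by
    simpa using h2
  rw [h2', Multiset.countP_map]
  rw [cnt, Finset.card, Finset.filter]
  simp

lemma mem_sortedVec {x : V → ℝ} {c : ℝ} (h : c ∈ sortedVec x) : ∃ i, x i = c := by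
  have h1 : ((sortedVec x : List ℝ) : Multiset ℝ) = Finset.univ.val.map x :=
    Multiset.sort_eq _ _
  have : c ∈ Finset.univ.val.map x := by rw [← h1]; exact_mod_cast h
  obtain ⟨i, -, hi⟩ := Multiset.mem_map.1 this
  exact ⟨i, hi⟩

-- generic sorted-list lemmas
lemma sorted_getD_mono {l : List ℝ} (h : l.Pairwise (· ≤ ·)) {a b : ℕ}
    (hab : a ≤ b) (hb : b < l.length) : l.getD a 0 ≤ l.getD b 0 := by
  rw [List.getD_eq_getElem _ _ (lt_of_le_of_lt hab hb), List.getD_eq_getElem _ _ hb]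
  rcases eq_or_lt_of_le hab with rfl | hlt
  · exact le_refl _
  · exact List.pairwise_iff_get.1 h ⟨a, _⟩ ⟨b, _⟩ (by simpa using hlt)

lemma countP_le_of_getD_gt {l : List ℝ} (h : l.Pairwise (· ≤ ·)) {t : ℕ} {c : ℝ}
    (ht : t < l.length) (hc : c < l.getD t 0) :
    l.countP (fun a => decide (a ≤ c)) ≤ t := by
  classical
  have hsplit : l = l.take t ++ l.drop t := (List.take_append_drop t l).symm
  have hdrop : (l.drop t).countP (fun a => decide (a ≤ c)) = 0 := by
    rw [List.countP_eq_zero]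
    intro a ha
    obtain ⟨u, hu, hget⟩ := List.mem_iff_getElem.1 ha
    have hlen : (l.drop t).length = l.length - t := List.length_drop
    have hx : a = l.getD (t + u) 0 := by
      rw [List.getD_eq_getElem _ _ (by omega : t + u < l.length), ← hget,
        List.getElem_drop']
    have hge : l.getD t 0 ≤ l.getD (t + u) 0 :=
      sorted_getD_mono h (Nat.le_add_right t u) (by omega)
    simp only [decide_eq_true_eq]
    push_neg
    rw [hx]; linarith
  calc l.countP (fun a => decide (a ≤ c))
      = (l.take t).countP _ + (l.drop t).countP _ := by
        conv_lhs => rw [hsplit]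
        exact List.countP_append
    _ = (l.take t).countP _ := by rw [hdrop]; ring
    _ ≤ (l.take t).length := List.countP_le_length
    _ ≤ t := by simp [List.length_take]

lemma getD_le_of_lt_countP {l : List ℝ} (h : l.Pairwise (· ≤ ·)) {t : ℕ} {c : ℝ}
    (ht : t < l.length) (hcnt : t < l.countP (fun a => decide (a ≤ c))) :
    l.getD t 0 ≤ c := by
  by_contra hgt
  push_neg at hgt
  have := countP_le_of_getD_gt h ht hgt
  omega

lemma le_countP_of_getD_le {l : List ℝ} (h : l.Pairwise (· ≤ ·)) {t : ℕ} {c : ℝ}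
    (ht : t < l.length) (hc : l.getD t 0 ≤ c) :
    t + 1 ≤ l.countP (fun a => decide (a ≤ c)) := by
  classical
  have hsplit : l = l.take (t+1) ++ l.drop (t+1) := (List.take_append_drop (t+1) l).symm
  have htake : (l.take (t+1)).countP (fun a => decide (a ≤ c)) = (l.take (t+1)).length := by
    rw [List.countP_eq_length]
    intro a ha
    obtain ⟨u, hu, hget⟩ := List.mem_iff_getElem.1 ha
    have hu' : u < t + 1 := by
      have := List.length_take (i := t+1) (l := l)
      omega
    have hx : a = l.getD u 0 := by
      rw [List.getD_eq_getElem _ _ (by omega : u < l.length), ← hget, List.getElem_take]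
    have : a ≤ l.getD t 0 := by rw [hx]; exact sorted_getD_mono h (by omega) ht
    simp only [decide_eq_true_eq]
    linarith
  have hlen : (l.take (t+1)).length = t + 1 := by
    rw [List.length_take]; omega
  calc t + 1 = (l.take (t+1)).countP (fun a => decide (a ≤ c)) := by rw [htake, hlen]
    _ ≤ l.countP (fun a => decide (a ≤ c)) := by
        conv_rhs => rw [hsplit]
        rw [List.countP_append]
        omega

lemma take_eq_take_of_prefix {l l' : List ℝ} (hlen : l.length = l'.length) {t : ℕ}
    (h : ∀ j < t, l.getD j 0 = l'.getD j 0) : l.take t = l'.take t := by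
  apply List.ext_get
  · simp [List.length_take, hlen]
  · intro n h1 h2
    have hn : n < t := by
      have := List.length_take (i := t) (l := l)
      omega
    have hnl : n < l.length := by
      have := List.length_take (i := t) (l := l)
      omega
    simp only [List.get_eq_getElem, List.getElem_take]
    have := h n hn
    rw [List.getD_eq_getElem _ _ hnl, List.getD_eq_getElem _ _ (by omega)] at this
    exact this

end CountLists

end SharingEcon
namespace SharingEcon

section LexLemmas

variable {V : Type*} [Fintype V]

/-- Either `lexGE x y`, or there is a first position where sorted `y` strictly beats sorted `x`. -/
lemma lexGE_or_firstdiff (x y : V → ℝ) :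
    lexGE x y ∨ ∃ t, t < (sortedVec x).length ∧
      (∀ j < t, (sortedVec x).getD j 0 = (sortedVec y).getD j 0) ∧
      (sortedVec x).getD t 0 < (sortedVec y).getD t 0 := by
  classical
  by_cases heq : sortedVec x = sortedVec y
  · exact Or.inl (Or.inl heq)
  · have hlen : (sortedVec x).length = (sortedVec y).length := by
      rw [sortedVec_length, sortedVec_length]
    have hex : ∃ j, (sortedVec x).getD j 0 ≠ (sortedVec y).getD j 0 := by
      by_contra hall
      push_neg at hall
      apply heq
      apply List.ext_getElem hlen
      intro n h1 h2
      have := hall n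
      rw [List.getD_eq_getElem _ _ h1, List.getD_eq_getElem _ _ h2] at this
      exact this
    set t := Nat.find hex with hts
    have htd : (sortedVec x).getD t 0 ≠ (sortedVec y).getD t 0 := Nat.find_spec hex
    have hpre : ∀ j < t, (sortedVec x).getD j 0 = (sortedVec y).getD j 0 := by
      intro j hj
      by_contra hne
      have hle : Nat.find hex ≤ j := Nat.find_le hne
      omega
    have htlen : t < (sortedVec x).length := by
      by_contra hge
      push_neg at hge
      apply htd
      rw [List.getD_eq_default _ _ hge, List.getD_eq_default _ _ (by omega)]
    rcases lt_or_gt_of_ne htd with hlt | hgt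
    · exact Or.inr ⟨t, htlen, hpre, hlt⟩
    · exact Or.inl (Or.inr ⟨t, hpre, hgt⟩)

/-- If counts agree below `c0` and `y` has strictly fewer small coordinates at `c0`,
then `x` is NOT lexicographically ≥ `y`. -/
lemma not_lexGE_of_cnt {x y : V → ℝ} {c0 : ℝ}
    (heq : ∀ c < c0, cnt y c = cnt x c) (hlt : cnt y c0 < cnt x c0) :
    ¬ lexGE x y := by
  classical
  have hsx : (sortedVec x).Pairwise (· ≤ ·) := sortedVec_sorted x
  have hsy : (sortedVec y).Pairwise (· ≤ ·) := sortedVec_sorted y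
  have hlenx : (sortedVec x).length = Fintype.card V := sortedVec_length x
  have hleny : (sortedVec y).length = Fintype.card V := sortedVec_length y
  set l := sortedVec x
  set l' := sortedVec y
  set p := cnt y c0 with hp
  have hpx : p < cnt x c0 := hlt
  have hcx : cnt x c0 ≤ Fintype.card V := cnt_le_card x c0
  have hplx : p < l.length := by omega
  have hply : p < l'.length := by omega
  have hcx' : ∀ c, cnt x c = l.countP (fun a => decide (a ≤ c)) := cnt_eq_countP x
  have hcy' : ∀ c, cnt y c = l'.countP (fun a => decide (a ≤ c)) := cnt_eq_countP y
  -- l.getD p 0 ≤ c0 < l'.getD p 0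
  have hxp : l.getD p 0 ≤ c0 := getD_le_of_lt_countP hsx hplx (by rw [← hcx' c0]; omega)
  have hyp : c0 < l'.getD p 0 := by
    by_contra hle
    push_neg at hle
    have := le_countP_of_getD_le hsy hply hle
    rw [← hcy'] at this
    omega
  -- prefix equality
  have hpre : ∀ q < p, l.getD q 0 = l'.getD q 0 := by
    intro q hq
    have hqlx : q < l.length := by omega
    have hqly : q < l'.length := by omega
    have hxq : l.getD q 0 ≤ c0 := getD_le_of_lt_countP hsx hqlx (by rw [← hcx' c0]; omega)
    have hyq : l'.getD q 0 ≤ c0 := getD_le_of_lt_countP hsy hqly (by rw [← hcy' c0]; omega)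
    by_contra hne
    rcases lt_or_gt_of_ne hne with hlt1 | hgt1
    · -- l_q < l'_q ≤ c0
      set c' := l.getD q 0 with hc'
      have h1 : q + 1 ≤ cnt x c' := by
        rw [hcx' c']
        exact le_countP_of_getD_le hsx hqlx (le_refl _)
      have h2 : cnt y c' ≤ q := by
        rw [hcy' c']
        exact countP_le_of_getD_gt hsy hqly hlt1
      have := heq c' (lt_of_lt_of_le hlt1 hyq)
      omega
    · set c' := l'.getD q 0 with hc'
      have h1 : q + 1 ≤ cnt y c' := by
        rw [hcy' c']
        exact le_countP_of_getD_le hsy hqly (le_refl _)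
      have h2 : cnt x c' ≤ q := by
        rw [hcx' c']
        exact countP_le_of_getD_gt hsx hqlx hgt1
      have := heq c' (lt_of_lt_of_le hgt1 hxq)
      omega
  -- conclude
  intro hlex
  rcases hlex with hEq | ⟨k, hkpre, hklt⟩
  · have hll : l = l' := hEq
    rw [hll] at hxp
    linarith
  · rcases lt_trichotomy k p with hk | hk | hk
    · have := hpre k hk
      rw [this] at hklt
      linarith
    · subst hk
      linarith
    · have := hkpre p hk
      rw [this] at hxp
      linarith

/-- Counts at levels strictly below the first-difference value are dominated. -/
lemma cnt_le_of_firstdiff {x y : V → ℝ} {t : ℕ}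
    (ht : t < (sortedVec y).length)
    (hpre : ∀ j < t, (sortedVec x).getD j 0 = (sortedVec y).getD j 0)
    {c : ℝ} (hc : c < (sortedVec y).getD t 0) :
    cnt y c ≤ cnt x c := by
  classical
  set l := sortedVec x with hl
  set l' := sortedVec y with hl'
  have hsy : l'.Pairwise (· ≤ ·) := sortedVec_sorted y
  have hlen : l.length = l'.length := by rw [hl, hl', sortedVec_length, sortedVec_length]
  have hsplit : l' = l'.take t ++ l'.drop t := (List.take_append_drop t l').symm
  have hdrop : (l'.drop t).countP (fun a => decide (a ≤ c)) = 0 := by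
    rw [List.countP_eq_zero]
    intro a ha
    obtain ⟨u, hu, hget⟩ := List.mem_iff_getElem.1 ha
    have hlend : (l'.drop t).length = l'.length - t := List.length_drop
    have hx : a = l'.getD (t + u) 0 := by
      rw [List.getD_eq_getElem _ _ (by omega : t + u < l'.length), ← hget,
        List.getElem_drop']
    have hge : l'.getD t 0 ≤ l'.getD (t + u) 0 :=
      sorted_getD_mono hsy (Nat.le_add_right t u) (by omega)
    simp only [decide_eq_true_eq]
    push_neg
    rw [hx]; linarith
  have htake : l'.take t = l.take t := (take_eq_take_of_prefix hlen hpre).symm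
  calc cnt y c = l'.countP (fun a => decide (a ≤ c)) := cnt_eq_countP y c
    _ = (l'.take t).countP _ + (l'.drop t).countP _ := by
        conv_lhs => rw [hsplit]; rw [List.countP_append]
    _ = (l.take t).countP (fun a => decide (a ≤ c)) := by rw [hdrop, htake]; ring
    _ ≤ l.countP (fun a => decide (a ≤ c)) :=
        (List.take_sublist t l).countP_le
    _ = cnt x c := (cnt_eq_countP x c).symm

/-- Count is at most `t` for values below the `t`-th sorted entry (used with prefix equality). -/
lemma cnt_le_t_of_firstdiff {y : V → ℝ} {t : ℕ}
    (ht : t < (sortedVec y).length)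
    {c : ℝ} (hc : c < (sortedVec y).getD t 0) :
    cnt y c ≤ t := by
  rw [cnt_eq_countP]
  exact countP_le_of_getD_gt (sortedVec_sorted y) ht hc

end LexLemmas

end SharingEcon
namespace SharingEcon

variable {V : Type*} [Fintype V] [DecidableEq V]

/-- The low-set `H_k = {i : ρ_i ≤ v_k}` given as `{i : lvl i ≤ k}`. -/
def Ht (D r : V → ℝ) (k : ℕ) : Finset V :=
  Finset.univ.filter (fun i => lvl D r i ≤ k)

/-- All the prefix level sets are tight. -/
def ChainTight (G : SimpleGraph V) [DecidableRel G.Adj] (D r : V → ℝ) : Prop :=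
  ∀ k, 1 ≤ k → k ≤ numLevels D r → ∑ i ∈ Ht D r k, r i = fS G D (Ht D r k)

section ThmA

variable {G : SimpleGraph V} [DecidableRel G.Adj] {D r : V → ℝ}

lemma ratio_mul_D {i : V} (hD : 0 < D i) : ratio D r i * D i = r i := by
  rw [ratio]
  field_simp

lemma Ht_split {m : ℕ} (h1 : 1 ≤ m) (h2 : m ≤ numLevels D r) :
    Ht D r m = Ht D r (m - 1) ∪ level D r m ∧ Disjoint (Ht D r (m - 1)) (level D r m) := by
  constructor
  · ext i
    simp only [Ht, Finset.mem_union, Finset.mem_filter, Finset.mem_univ, true_and,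
      mem_level_iff_lvl h1 h2]
    omega
  · rw [Finset.disjoint_left]
    intro i hi hil
    rw [mem_level_iff_lvl h1 h2] at hil
    simp only [Ht, Finset.mem_filter] at hi
    omega

lemma sum_Ht_split {m : ℕ} (h1 : 1 ≤ m) (h2 : m ≤ numLevels D r) (g : V → ℝ) :
    ∑ i ∈ Ht D r m, g i = ∑ i ∈ Ht D r (m - 1), g i + ∑ i ∈ level D r m, g i := by
  obtain ⟨heq, hdisj⟩ := Ht_split h1 h2
  rw [heq, Finset.sum_union hdisj]

/-- ChainTight implies lexicographic optimality. -/
theorem lexopt_of_chainTight (hD : ∀ i, 0 < D i) (hr : r ∈ polyA (fS G D))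
    (hct : ChainTight G D r) : LexOptimal (polyA (fS G D)) D r := by
  classical
  refine ⟨hr, ?_⟩
  intro r' hr'
  have hxr : (fun i => r i / D i) = ratio D r := rfl
  have hyr : (fun i => r' i / D i) = ratio D r' := rfl
  rcases lexGE_or_firstdiff (fun i => r i / D i) (fun i => r' i / D i) with h | ⟨t, ht, hpre, hdf⟩
  · exact h
  exfalso
  rw [hxr] at ht hpre hdf
  rw [hyr] at hpre hdf
  -- the value at the first difference is some v k
  set c : ℝ := (sortedVec (ratio D r)).getD t 0 with hc
  have hcmem : c ∈ sortedVec (ratio D r) := by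
    rw [hc, List.getD_eq_getElem _ _ ht]
    exact List.getElem_mem _
  obtain ⟨i0, hi0⟩ := mem_sortedVec hcmem
  set k := lvl D r i0 with hk
  have hk1 : 1 ≤ k := one_le_lvl i0
  have hkK : k ≤ numLevels D r := lvl_le i0
  have hvk : v D r k = c := by rw [hk, v_lvl_eq_ratio, hi0]
  have hlen' : t < (sortedVec (ratio D r')).length := by
    rw [sortedVec_length]
    rw [sortedVec_length (ratio D r)] at ht
    exact ht
  -- key count bound
  have hKEY : ∀ c' : ℝ, c' < (sortedVec (ratio D r')).getD t 0 →
      cnt (ratio D r') c' ≤ cnt (ratio D r) c' := fun c' hc' =>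
    cnt_le_of_firstdiff hlen' hpre hc'
  have hvklt : c < (sortedVec (ratio D r')).getD t 0 := hdf
  -- counts of r-side in terms of levels
  have hcnt_level : ∀ (m : ℕ), 1 ≤ m → m ≤ numLevels D r → ∀ c' : ℝ,
      (∀ x : V, ratio D r x ≤ c' ↔ lvl D r x ≤ m) →
      cnt (ratio D r) c' = (Ht D r m).card := by
    intro m _ _ c' hiff
    rw [cnt, Ht]
    congr 1
    apply Finset.filter_congr
    intro x _
    exact hiff x
  -- Main induction: for m ≤ k,
  --   (GE m): every node of level ≥ m has ρ' ≥ v m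
  --   (EQ m): every node of level ≤ m has ρ' = ρ
  have main : ∀ m, 1 ≤ m → m ≤ k →
      (∀ i, m ≤ lvl D r i → v D r m ≤ ratio D r' i) ∧
      (∀ i, lvl D r i ≤ m → ratio D r' i = ratio D r i) := by
    intro m
    induction m using Nat.strong_induction_on with
    | _ m IH =>
      intro hm1 hmk
      -- first establish GE m
      have hGE : ∀ i, m ≤ lvl D r i → v D r m ≤ ratio D r' i := by
        intro i hi
        by_contra hlt
        push_neg at hlt
        set c' := ratio D r' i with hc'
        have hc'k : c' < v D r k := lt_of_lt_of_le hlt (v_le_v hm1 hmk hkK)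
        have hc'top : c' < (sortedVec (ratio D r')).getD t 0 := by
          rw [← hvk] at hvklt; linarith
        have hup : cnt (ratio D r') c' ≤ cnt (ratio D r) c' := hKEY c' hc'top
        rcases eq_or_lt_of_le hm1 with hm1' | hm2
        · -- m = 1 : cnt ρ c' = 0 but cnt ρ' c' ≥ 1
          have h0 : cnt (ratio D r) c' = 0 := by
            rw [cnt, Finset.card_eq_zero, Finset.filter_eq_empty_iff]
            intro x _
            push_neg
            calc c' < v D r m := hlt
              _ ≤ v D r (lvl D r x) := by
                  rw [← hm1']
                  exact v_le_v (le_refl 1) (one_le_lvl x) (lvl_le x)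
              _ = ratio D r x := v_lvl_eq_ratio x
          have h1 : 0 < cnt (ratio D r') c' := by
            rw [cnt]
            refine Finset.card_pos.2 ⟨i, ?_⟩
            simp only [Finset.mem_filter, Finset.mem_univ, true_and]
            rw [← hc']
          omega
        · -- m ≥ 2 : use EQ (m-1)
          have hIH := IH (m - 1) (by omega) (by omega) (by omega)
          have hEQm1 := hIH.2
          have hGEm1 := hIH.1
          have hm1K : m - 1 ≤ numLevels D r := by omega
          have hvm1c' : v D r (m - 1) ≤ c' := by
            have := hGEm1 i (by omega)
            rw [← hc'] at this
            exact this
          -- lower bound for cnt ρ'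
          have hsub : Ht D r (m - 1) ∪ {i} ⊆
              Finset.univ.filter (fun x => ratio D r' x ≤ c') := by
            intro x hx
            rcases Finset.mem_union.1 hx with hx1 | hx2
            · simp only [Ht, Finset.mem_filter] at hx1
              simp only [Finset.mem_filter, Finset.mem_univ, true_and]
              rw [hEQm1 x hx1.2]
              calc ratio D r x = v D r (lvl D r x) := (v_lvl_eq_ratio x).symm
                _ ≤ v D r (m - 1) := v_le_v (one_le_lvl x) hx1.2 hm1K
                _ ≤ c' := hvm1c'
            · simp only [Finset.mem_singleton] at hx2
              subst hx2
              simp [hc']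
          have hinotin : i ∉ Ht D r (m - 1) := by
            simp only [Ht, Finset.mem_filter, Finset.mem_univ, true_and]
            omega
          have hcard : (Ht D r (m - 1)).card + 1 ≤ cnt (ratio D r') c' := by
            have h1 : (Ht D r (m - 1) ∪ {i}).card = (Ht D r (m - 1)).card + 1 := by
              rw [Finset.union_comm, ← Finset.insert_eq,
                Finset.card_insert_of_notMem hinotin]
            calc (Ht D r (m - 1)).card + 1 = (Ht D r (m - 1) ∪ {i}).card := h1.symm
              _ ≤ _ := Finset.card_le_card hsub
          -- upper bound for cnt ρ
          have hcup : cnt (ratio D r) c' = (Ht D r (m - 1)).card := by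
            apply hcnt_level (m - 1) (by omega) hm1K
            intro x
            constructor
            · intro hx
              by_contra hgt
              push_neg at hgt
              have : v D r m ≤ v D r (lvl D r x) := v_le_v hm1 (by omega) (lvl_le x)
              rw [v_lvl_eq_ratio] at this
              linarith
            · intro hx
              calc ratio D r x = v D r (lvl D r x) := (v_lvl_eq_ratio x).symm
                _ ≤ v D r (m - 1) := v_le_v (one_le_lvl x) hx hm1K
                _ ≤ c' := hvm1c'
          omega
      refine ⟨hGE, ?_⟩
      -- now EQ m from tightness
      have htight : ∑ x ∈ Ht D r m, r x = fS G D (Ht D r m) :=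
        hct m hm1 (le_trans hmk hkK)
      have hfeas : ∑ x ∈ Ht D r m, r' x ≤ fS G D (Ht D r m) := hr'.2 _
      have hle : ∑ x ∈ Ht D r m, r' x ≤ ∑ x ∈ Ht D r m, r x := by
        rw [htight]; exact hfeas
      have hEQm1' : ∀ x, lvl D r x ≤ m - 1 → ratio D r' x = ratio D r x := by
        rcases eq_or_lt_of_le hm1 with hm1' | hm2
        · intro x hx
          have := one_le_lvl (D := D) (r := r) x
          omega
        · exact (IH (m - 1) (by omega) (by omega) (by omega)).2
      have hsum_eq_low : ∑ x ∈ Ht D r (m - 1), r' x = ∑ x ∈ Ht D r (m - 1), r x := by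
        apply Finset.sum_congr rfl
        intro x hx
        simp only [Ht, Finset.mem_filter] at hx
        have := hEQm1' x hx.2
        calc r' x = ratio D r' x * D x := (ratio_mul_D (hD x)).symm
          _ = ratio D r x * D x := by rw [this]
          _ = r x := ratio_mul_D (hD x)
      have hmK : m ≤ numLevels D r := le_trans hmk hkK
      rw [sum_Ht_split hm1 hmK r', sum_Ht_split hm1 hmK r, hsum_eq_low] at hle
      have hlev_le : ∑ x ∈ level D r m, r' x ≤ ∑ x ∈ level D r m, r x := by linarith
      -- pointwise ≥ on level m
      have hpw : ∀ x ∈ level D r m, r x ≤ r' x := by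
        intro x hx
        rw [mem_level_iff_lvl hm1 hmK] at hx
        have := hGE x (le_of_eq hx.symm)
        calc r x = ratio D r x * D x := (ratio_mul_D (hD x)).symm
          _ = v D r m * D x := by rw [← v_lvl_eq_ratio x, hx]
          _ ≤ ratio D r' x * D x := by
              apply mul_le_mul_of_nonneg_right this (le_of_lt (hD x))
          _ = r' x := ratio_mul_D (hD x)
      have hsum_eq : ∑ x ∈ level D r m, r x = ∑ x ∈ level D r m, r' x :=
        le_antisymm (Finset.sum_le_sum hpw) hlev_le
      have hpt := (Finset.sum_eq_sum_iff_of_le hpw).1 hsum_eq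
      intro x hx
      rcases Nat.lt_or_ge (lvl D r x) m with hxm | hxm
      · exact hEQm1' x (by omega)
      · have hxm' : lvl D r x = m := by omega
        have hxlev : x ∈ level D r m := (mem_level_iff_lvl hm1 hmK).2 hxm'
        have hpx := hpt x hxlev
        show r' x / D x = r x / D x
        rw [hpx]
  -- final contradiction
  obtain ⟨hGEk, hEQk⟩ := main k hk1 (le_refl k)
  -- all of Ht k has ρ' ≤ v k, so cnt ρ' (v k) ≥ card (Ht k)
  have hlow : (Ht D r k) ⊆ Finset.univ.filter (fun x => ratio D r' x ≤ v D r k) := by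
    intro x hx
    simp only [Ht, Finset.mem_filter, Finset.mem_univ, true_and] at hx ⊢
    rw [hEQk x hx]
    calc ratio D r x = v D r (lvl D r x) := (v_lvl_eq_ratio x).symm
      _ ≤ v D r k := v_le_v (one_le_lvl x) hx hkK
  have h1 : (Ht D r k).card ≤ cnt (ratio D r') (v D r k) :=
    Finset.card_le_card hlow
  -- cnt ρ (v k) = card (Ht k) and ≥ t + 1
  have h2 : cnt (ratio D r) (v D r k) = (Ht D r k).card := by
    apply hcnt_level k hk1 hkK
    intro x
    exact ratio_le_iff_lvl_le hk1 hkK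
  have h3 : t + 1 ≤ cnt (ratio D r) (v D r k) := by
    rw [cnt_eq_countP]
    apply le_countP_of_getD_le (sortedVec_sorted _) ht
    rw [hvk]
  have h4 : cnt (ratio D r') (v D r k) ≤ t := by
    apply cnt_le_t_of_firstdiff hlen'
    rw [hvk]
    exact hvklt
  omega

end ThmA

end SharingEcon
namespace SharingEcon

variable {V : Type*} [Fintype V] [DecidableEq V]

section Submod

variable (G : SimpleGraph V) [DecidableRel G.Adj] (D : V → ℝ)

lemma nbrs_union (S T : Finset V) : nbrs G (S ∪ T) = nbrs G S ∪ nbrs G T := by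
  ext x
  simp only [nbrs, Finset.mem_biUnion, Finset.mem_union]
  constructor
  · rintro ⟨a, ha | ha, hx⟩
    · exact Or.inl ⟨a, ha, hx⟩
    · exact Or.inr ⟨a, ha, hx⟩
  · rintro (⟨a, ha, hx⟩ | ⟨a, ha, hx⟩)
    · exact ⟨a, Or.inl ha, hx⟩
    · exact ⟨a, Or.inr ha, hx⟩

lemma nbrs_mono {S T : Finset V} (h : S ⊆ T) : nbrs G S ⊆ nbrs G T :=
  Finset.biUnion_subset_biUnion_of_subset_left _ h

lemma nbrs_inter_subset (S T : Finset V) : nbrs G (S ∩ T) ⊆ nbrs G S ∩ nbrs G T :=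
  Finset.subset_inter (nbrs_mono G (Finset.inter_subset_left))
    (nbrs_mono G (Finset.inter_subset_right))

lemma fS_empty : fS G D ∅ = 0 := by
  simp [fS, nbrs]

variable {D}

lemma fS_mono (hD : ∀ i, 0 ≤ D i) {S T : Finset V} (h : S ⊆ T) : fS G D S ≤ fS G D T :=
  Finset.sum_le_sum_of_subset_of_nonneg (nbrs_mono G h) (fun i _ _ => hD i)

lemma fS_submod (hD : ∀ i, 0 ≤ D i) (S T : Finset V) :
    fS G D (S ∪ T) + fS G D (S ∩ T) ≤ fS G D S + fS G D T := by
  have h1 : fS G D (S ∪ T) = ∑ j ∈ nbrs G S ∪ nbrs G T, D j := by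
    rw [fS, nbrs_union]
  have h2 : fS G D (S ∩ T) ≤ ∑ j ∈ nbrs G S ∩ nbrs G T, D j :=
    Finset.sum_le_sum_of_subset_of_nonneg (nbrs_inter_subset G S T) (fun i _ _ => hD i)
  have h3 : ∑ j ∈ nbrs G S ∪ nbrs G T, D j + ∑ j ∈ nbrs G S ∩ nbrs G T, D j
      = fS G D S + fS G D T := Finset.sum_union_inter
  calc fS G D (S ∪ T) + fS G D (S ∩ T)
      ≤ ∑ j ∈ nbrs G S ∪ nbrs G T, D j + ∑ j ∈ nbrs G S ∩ nbrs G T, D j := by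
        rw [h1]; linarith
    _ = fS G D S + fS G D T := h3

end Submod

section TightSets

variable {G : SimpleGraph V} [DecidableRel G.Adj] {D r : V → ℝ}

/-- A tight set for `r` in the polymatroid. -/
def Tight (G : SimpleGraph V) [DecidableRel G.Adj] (D r : V → ℝ) (S : Finset V) : Prop :=
  ∑ i ∈ S, r i = fS G D S

lemma tight_empty : Tight G D r ∅ := by
  simp [Tight, fS_empty]

lemma tight_union (hD : ∀ i, 0 ≤ D i) (hr : r ∈ polyA (fS G D))
    {S T : Finset V} (hS : Tight G D r S) (hT : Tight G D r T) :
    Tight G D r (S ∪ T) ∧ Tight G D r (S ∩ T) := by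
  have hsum : ∑ i ∈ S ∪ T, r i + ∑ i ∈ S ∩ T, r i = ∑ i ∈ S, r i + ∑ i ∈ T, r i :=
    Finset.sum_union_inter
  have h1 : ∑ i ∈ S ∪ T, r i ≤ fS G D (S ∪ T) := hr.2 _
  have h2 : ∑ i ∈ S ∩ T, r i ≤ fS G D (S ∩ T) := hr.2 _
  have h3 := fS_submod G hD S T
  rw [Tight] at hS hT ⊢
  constructor
  · linarith
  · rw [Tight]; linarith

end TightSets

end SharingEcon
namespace SharingEcon

variable {V : Type*} [Fintype V] [DecidableEq V]

section ThmB

variable {G : SimpleGraph V} [DecidableRel G.Adj] {D r : V → ℝ}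

lemma sum_perturb (S : Finset V) (i j : V) (ε : ℝ) :
    ∑ x ∈ S, (r x + (if x = i then ε else 0) - (if x = j then ε else 0))
      = ∑ x ∈ S, r x + (if i ∈ S then ε else 0) - (if j ∈ S then ε else 0) := by
  rw [Finset.sum_sub_distrib, Finset.sum_add_distrib,
    Finset.sum_ite_eq' S i, Finset.sum_ite_eq' S j]

lemma sum_raise (S : Finset V) (i : V) (ε : ℝ) :
    ∑ x ∈ S, (r x + (if x = i then ε else 0))
      = ∑ x ∈ S, r x + (if i ∈ S then ε else 0) := by
  rw [Finset.sum_add_distrib, Finset.sum_ite_eq' S i]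

lemma ratio_nonneg (hD : ∀ i, 0 < D i) (hr : r ∈ polyA (fS G D)) (i : V) :
    0 ≤ ratio D r i :=
  div_nonneg (hr.1 i) (le_of_lt (hD i))

/-- If `r2` increases the ratio at `i` and is otherwise no worse below `ρ i`,
then `r` is not lexicographically at least `r2`. -/
lemma not_lexGE_of_perturb {r2 : V → ℝ} {i : V}
    (hup : ratio D r i < ratio D r2 i)
    (hiff : ∀ x, x ≠ i → ∀ c : ℝ, c ≤ ratio D r i →
      (ratio D r2 x ≤ c ↔ ratio D r x ≤ c)) :
    ¬ lexGE (fun a => r a / D a) (fun a => r2 a / D a) := by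
  classical
  have heq : ∀ c < ratio D r i, cnt (ratio D r2) c = cnt (ratio D r) c := by
    intro c hc
    rw [cnt, cnt]
    congr 1
    apply Finset.filter_congr
    intro x _
    by_cases hx : x = i
    · subst hx
      constructor
      · intro h; linarith
      · intro h; linarith
    · exact hiff x hx c (le_of_lt hc)
  have hlt : cnt (ratio D r2) (ratio D r i) < cnt (ratio D r) (ratio D r i) := by
    rw [cnt, cnt]
    have hsub : Finset.univ.filter (fun x => ratio D r2 x ≤ ratio D r i) ⊆
        (Finset.univ.filter (fun x => ratio D r x ≤ ratio D r i)).erase i := by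
      intro x hx
      simp only [Finset.mem_filter, Finset.mem_univ, true_and] at hx
      have hxi : x ≠ i := by
        intro h; subst h; linarith
      rw [Finset.mem_erase]
      refine ⟨hxi, ?_⟩
      simp only [Finset.mem_filter, Finset.mem_univ, true_and]
      exact (hiff x hxi _ (le_refl _)).1 hx
    have h1 := Finset.card_le_card hsub
    have himem : i ∈ Finset.univ.filter (fun x => ratio D r x ≤ ratio D r i) := by
      simp
    have h2 := Finset.card_erase_of_mem himem
    have h3 : 0 < (Finset.univ.filter (fun x => ratio D r x ≤ ratio D r i)).card :=
      Finset.card_pos.2 ⟨i, himem⟩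
    omega
  exact not_lexGE_of_cnt heq hlt

/-- A lex-optimal vector makes the whole ground set tight. -/
lemma tight_univ_of_lexopt (hD : ∀ i, 0 < D i)
    (hlex : LexOptimal (polyA (fS G D)) D r) : Tight G D r Finset.univ := by
  classical
  by_contra hnt
  have hr := hlex.1
  have hex : ∃ i : V, ∀ S : Finset V, i ∈ S → ¬ Tight G D r S := by
    by_contra hall
    push_neg at hall
    have hcover : ∀ s : Finset V, ∃ T, Tight G D r T ∧ s ⊆ T := by
      intro s
      induction s using Finset.induction_on with
      | empty => exact ⟨∅, tight_empty, by simp⟩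
      | @insert a s' hns IH =>
        obtain ⟨T, hT, hsT⟩ := IH
        obtain ⟨S, haS, hS⟩ := hall a
        refine ⟨T ∪ S, (tight_union (fun i => le_of_lt (hD i)) hr hT hS).1, ?_⟩
        intro x hx
        rcases Finset.mem_insert.1 hx with rfl | hx'
        · exact Finset.mem_union_right _ haS
        · exact Finset.mem_union_left _ (hsT hx')
    obtain ⟨T, hT, hsub⟩ := hcover Finset.univ
    have : T = Finset.univ := Finset.univ_subset_iff.1 hsub
    rw [this] at hT
    exact hnt hT
  obtain ⟨i, hi⟩ := hex
  set F := Finset.univ.powerset.filter (fun S : Finset V => i ∈ S) with hF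
  have hFne : F.Nonempty := ⟨Finset.univ, by simp [hF]⟩
  set g : Finset V → ℝ := fun S => fS G D S - ∑ x ∈ S, r x with hg
  have hgpos : ∀ S ∈ F, 0 < g S := by
    intro S hS
    simp only [hF, Finset.mem_filter] at hS
    have h1 : ∑ x ∈ S, r x ≤ fS G D S := hr.2 S
    have h2 : ¬ Tight G D r S := hi S hS.2
    rw [Tight] at h2
    simp only [hg]
    rcases lt_or_eq_of_le h1 with h | h
    · linarith
    · exact absurd h h2
  set ε := (F.image g).min' (hFne.image g) with hε
  have hεpos : 0 < ε := by
    have hmem := Finset.min'_mem (F.image g) (hFne.image g)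
    rw [← hε] at hmem
    obtain ⟨S, hS, hgS⟩ := Finset.mem_image.1 hmem
    rw [← hgS]
    exact hgpos S hS
  have hεle : ∀ S : Finset V, i ∈ S → ε ≤ g S := by
    intro S hiS
    apply Finset.min'_le
    exact Finset.mem_image_of_mem g (by simp [hF, hiS])
  set r2 : V → ℝ := fun x => r x + (if x = i then ε else 0) with hr2
  have hr2mem : r2 ∈ polyA (fS G D) := by
    constructor
    · intro x
      simp only [hr2]
      have := hr.1 x
      split <;> linarith
    · intro S
      rw [hr2, sum_raise]
      by_cases hiS : i ∈ S
      · simp only [hiS, if_true]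
        have := hεle S hiS
        simp only [hg] at this
        linarith
      · simp only [hiS, if_false]
        have := hr.2 S
        linarith
  have hrat : ∀ x, x ≠ i → ratio D r2 x = ratio D r x := by
    intro x hx
    simp [ratio, hr2, hx]
  have hrati : ratio D r i < ratio D r2 i := by
    simp only [ratio, hr2, if_true]
    gcongr
    · exact hD i
    · linarith
  have hnot := not_lexGE_of_perturb hrati (fun x hx c _ => by rw [hrat x hx])
  exact hnot (hlex.2 r2 hr2mem)

/-- Separation: if `ρ i < ρ j` then some tight set contains `i` but not `j`. -/
lemma exists_tight_separating (hD : ∀ i, 0 < D i)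
    (hlex : LexOptimal (polyA (fS G D)) D r) {i j : V}
    (hij : ratio D r i < ratio D r j) :
    ∃ S, Tight G D r S ∧ i ∈ S ∧ j ∉ S := by
  classical
  by_contra hno
  push_neg at hno
  have hr := hlex.1
  have hne : i ≠ j := by
    intro h; subst h; exact lt_irrefl _ hij
  set F := Finset.univ.powerset.filter (fun S : Finset V => i ∈ S ∧ j ∉ S) with hF
  have hFne : F.Nonempty := by
    refine ⟨{i}, ?_⟩
    simp [hF, hne.symm]
  set g : Finset V → ℝ := fun S => fS G D S - ∑ x ∈ S, r x with hg
  have hgpos : ∀ S ∈ F, 0 < g S := by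
    intro S hS
    simp only [hF, Finset.mem_filter] at hS
    have h1 : ∑ x ∈ S, r x ≤ fS G D S := hr.2 S
    have h2 : ¬ Tight G D r S := by
      intro ht
      exact hS.2.2 (hno S ht hS.2.1)
    rw [Tight] at h2
    simp only [hg]
    rcases lt_or_eq_of_le h1 with h | h
    · linarith
    · exact absurd h h2
  set ε0 := (F.image g).min' (hFne.image g) with hε0
  have hε0pos : 0 < ε0 := by
    have hmem := Finset.min'_mem (F.image g) (hFne.image g)
    rw [← hε0] at hmem
    obtain ⟨S, hS, hgS⟩ := Finset.mem_image.1 hmem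
    rw [← hgS]
    exact hgpos S hS
  have hε0le : ∀ S : Finset V, i ∈ S → j ∉ S → ε0 ≤ g S := by
    intro S hiS hjS
    apply Finset.min'_le
    exact Finset.mem_image_of_mem g (by simp [hF, hiS, hjS])
  have hρi0 : 0 ≤ ratio D r i := ratio_nonneg hD hr i
  have hrj : 0 < r j := by
    have h1 : 0 < ratio D r j := lt_of_le_of_lt hρi0 hij
    rw [ratio] at h1
    have hDj := hD j
    have h2 := mul_pos h1 hDj
    rwa [div_mul_cancel₀ _ (ne_of_gt hDj)] at h2
  set ε := min ε0 (min (r j / 2) ((ratio D r j - ratio D r i) * D j / 2)) with hεdef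
  have hεpos : 0 < ε := by
    apply lt_min hε0pos
    apply lt_min
    · linarith
    · have hDj := hD j
      have : 0 < ratio D r j - ratio D r i := by linarith
      positivity
  have hεrj : ε ≤ r j / 2 := le_trans (min_le_right _ _) (min_le_left _ _)
  have hεgap : ε ≤ (ratio D r j - ratio D r i) * D j / 2 :=
    le_trans (min_le_right _ _) (min_le_right _ _)
  have hεε0 : ε ≤ ε0 := min_le_left _ _
  set r2 : V → ℝ := fun x => r x + (if x = i then ε else 0) - (if x = j then ε else 0)
    with hr2
  have hr2i : r2 i = r i + ε := by
    simp [hr2, hne]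
  have hr2j : r2 j = r j - ε := by
    simp [hr2, hne.symm]
  have hr2o : ∀ x, x ≠ i → x ≠ j → r2 x = r x := by
    intro x h1 h2
    simp [hr2, h1, h2]
  have hr2mem : r2 ∈ polyA (fS G D) := by
    constructor
    · intro x
      by_cases h1 : x = i
      · rw [h1, hr2i]; have := hr.1 i; linarith
      · by_cases h2 : x = j
        · rw [h2, hr2j]; linarith
        · rw [hr2o x h1 h2]; exact hr.1 x
    · intro S
      rw [hr2, sum_perturb]
      have hfeas := hr.2 S
      by_cases hiS : i ∈ S
      · by_cases hjS : j ∈ S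
        · simp only [hiS, hjS, if_true]
          linarith
        · simp only [hiS, hjS, if_true, if_false]
          have := hε0le S hiS hjS
          simp only [hg] at this
          linarith
      · by_cases hjS : j ∈ S
        · simp only [hiS, hjS, if_true, if_false]
          linarith
        · simp only [hiS, hjS, if_false]
          linarith
  -- ratios of r2
  have hrati : ratio D r i < ratio D r2 i := by
    simp only [ratio, hr2i]
    gcongr
    · exact hD i
    · linarith
  have hratj : ratio D r i < ratio D r2 j := by
    have hDj := hD j
    have hval : ratio D r2 j = ratio D r j - ε / D j := by
      rw [ratio, hr2j, sub_div, ratio]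
    have h1 : ε / D j ≤ (ratio D r j - ratio D r i) / 2 := by
      rw [div_le_div_iff₀ hDj (by norm_num : (0:ℝ) < 2)]
      linarith
    rw [hval]
    linarith
  have hratjr : ratio D r i < ratio D r j := hij
  have hrato : ∀ x, x ≠ i → x ≠ j → ratio D r2 x = ratio D r x := by
    intro x h1 h2
    rw [ratio, ratio, hr2o x h1 h2]
  have hnot := not_lexGE_of_perturb hrati (fun x hx c hc => by
    by_cases hxj : x = j
    · subst hxj
      constructor
      · intro h
        exfalso
        have := lt_of_le_of_lt hc hij  -- unreachable values
        linarith [hratj]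
      · intro h
        exfalso
        have := lt_of_le_of_lt hc hij
        linarith
    · rw [hrato x hx hxj])
  exact hnot (hlex.2 r2 hr2mem)

/-- Lex-optimality implies all level prefixes are tight. -/
theorem chainTight_of_lexopt (hD : ∀ i, 0 < D i)
    (hlex : LexOptimal (polyA (fS G D)) D r) : ChainTight G D r := by
  classical
  intro k hk1 hkK
  have hr := hlex.1
  have hDpos : ∀ i, (0:ℝ) ≤ D i := fun i => le_of_lt (hD i)
  -- ratio comparison across Ht k
  have hcomp : ∀ x y : V, lvl D r x ≤ k → ¬ (lvl D r y ≤ k) →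
      ratio D r x < ratio D r y := by
    intro x y hx hy
    push_neg at hy
    calc ratio D r x = v D r (lvl D r x) := (v_lvl_eq_ratio x).symm
      _ ≤ v D r k := v_le_v (one_le_lvl x) hx hkK
      _ < v D r (lvl D r y) := v_lt_v hk1 hy (lvl_le y)
      _ = ratio D r y := v_lvl_eq_ratio y
  -- tight set containing a given low node and avoiding a finite set of high nodes
  have havoid : ∀ B : Finset V, (∀ b ∈ B, ¬ (lvl D r b ≤ k)) →
      ∀ i : V, lvl D r i ≤ k → ∃ T, Tight G D r T ∧ i ∈ T ∧ ∀ b ∈ B, b ∉ T := by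
    intro B
    induction B using Finset.induction_on with
    | empty =>
      intro _ i _
      exact ⟨Finset.univ, tight_univ_of_lexopt hD hlex, Finset.mem_univ i, by simp⟩
    | @insert b B' hnb IH =>
      intro hB i hik
      have hB' : ∀ x ∈ B', ¬ (lvl D r x ≤ k) := fun x hx => hB x (Finset.mem_insert_of_mem hx)
      obtain ⟨T, hT, hiT, hBT⟩ := IH hB' i hik
      have hbk : ¬ (lvl D r b ≤ k) := hB b (Finset.mem_insert_self b B')
      obtain ⟨S, hS, hiS, hbS⟩ :=
        exists_tight_separating hD hlex (hcomp i b hik hbk)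
      refine ⟨T ∩ S, (tight_union hDpos hr hT hS).2, Finset.mem_inter.2 ⟨hiT, hiS⟩, ?_⟩
      intro x hx
      rcases Finset.mem_insert.1 hx with rfl | hx'
      · intro hmem
        exact hbS (Finset.mem_inter.1 hmem).2
      · intro hmem
        exact hBT x hx' (Finset.mem_inter.1 hmem).1
  -- tight set containing any subset of Ht k within Ht k
  have hcover : ∀ C : Finset V, C ⊆ Ht D r k →
      ∃ T, Tight G D r T ∧ C ⊆ T ∧ T ⊆ Ht D r k := by
    intro C
    induction C using Finset.induction_on with
    | empty =>
      intro _
      exact ⟨∅, tight_empty, by simp, Finset.empty_subset _⟩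
    | @insert a C' hna IH =>
      intro hsub
      have hC' : C' ⊆ Ht D r k := fun x hx => hsub (Finset.mem_insert_of_mem hx)
      obtain ⟨T, hT, hCT, hTH⟩ := IH hC'
      have hak : lvl D r a ≤ k := by
        have := hsub (Finset.mem_insert_self a C')
        simp only [Ht, Finset.mem_filter] at this
        exact this.2
      set B := Finset.univ.filter (fun b => ¬ (lvl D r b ≤ k)) with hB
      obtain ⟨Ta, hTa, haTa, hBTa⟩ := havoid B
        (fun b hb => (Finset.mem_filter.1 hb).2) a hak
      have hTaH : Ta ⊆ Ht D r k := by
        intro x hx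
        simp only [Ht, Finset.mem_filter, Finset.mem_univ, true_and]
        by_contra hxk
        exact hBTa x (by
          simp only [hB, Finset.mem_filter, Finset.mem_univ, true_and]
          exact hxk) hx
      refine ⟨T ∪ Ta, (tight_union hDpos hr hT hTa).1, ?_, ?_⟩
      · intro x hx
        rcases Finset.mem_insert.1 hx with rfl | hx'
        · exact Finset.mem_union_right _ haTa
        · exact Finset.mem_union_left _ (hCT hx')
      · intro x hx
        rcases Finset.mem_union.1 hx with h | h
        · exact hTH h
        · exact hTaH h
  obtain ⟨T, hT, hsub1, hsub2⟩ := hcover (Ht D r k) (le_refl _)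
  have : T = Ht D r k := Finset.Subset.antisymm hsub2 hsub1
  rw [← this]
  exact hT

end ThmB

end SharingEcon
namespace SharingEcon

variable {V : Type*} [Fintype V] [DecidableEq V]

section Phi

variable (G : SimpleGraph V) [DecidableRel G.Adj] (D r : V → ℝ)

/-- Minimum level among the neighbors of `j`. -/
def philvl (hniso : ∀ i, (G.neighborFinset i).Nonempty) (j : V) : ℕ :=
  (G.neighborFinset j).inf' (hniso j) (lvl D r)

variable {G D r}
variable {hniso : ∀ i, (G.neighborFinset i).Nonempty}

lemma philvl_le {j x : V} (hx : G.Adj j x) :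
    philvl G D r hniso j ≤ lvl D r x :=
  Finset.inf'_le _ ((SimpleGraph.mem_neighborFinset G j x).2 hx)

lemma exists_philvl (j : V) :
    ∃ x, G.Adj j x ∧ lvl D r x = philvl G D r hniso j := by
  obtain ⟨x, hx, hval⟩ := Finset.exists_mem_eq_inf' (hniso j) (lvl D r)
  exact ⟨x, (SimpleGraph.mem_neighborFinset G j x).1 hx, hval.symm⟩

lemma one_le_philvl (j : V) : 1 ≤ philvl G D r hniso j := by
  obtain ⟨x, -, hval⟩ := exists_philvl (D := D) (r := r) (hniso := hniso) j
  rw [← hval]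
  exact one_le_lvl x

lemma philvl_le_K (j : V) : philvl G D r hniso j ≤ numLevels D r := by
  obtain ⟨x, -, hval⟩ := exists_philvl (D := D) (r := r) (hniso := hniso) j
  rw [← hval]
  exact lvl_le x

lemma mem_nbrs_iff {S : Finset V} {j : V} :
    j ∈ nbrs G S ↔ ∃ i ∈ S, G.Adj i j := by
  simp only [nbrs, Finset.mem_biUnion, SimpleGraph.mem_neighborFinset]

lemma nbrs_Ht_eq (k : ℕ) :
    nbrs G (Ht D r k) = Finset.univ.filter (fun z => philvl G D r hniso z ≤ k) := by
  ext z
  rw [mem_nbrs_iff]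
  simp only [Finset.mem_filter, Finset.mem_univ, true_and]
  constructor
  · rintro ⟨i, hi, hadj⟩
    have hi' : lvl D r i ≤ k := by
      simpa [Ht] using hi
    calc philvl G D r hniso z ≤ lvl D r i := philvl_le hadj.symm
      _ ≤ k := hi'
  · intro h
    obtain ⟨x, hadj, hval⟩ := exists_philvl (D := D) (r := r) (hniso := hniso) z
    refine ⟨x, ?_, hadj.symm⟩
    simp only [Ht, Finset.mem_filter, Finset.mem_univ, true_and]
    omega

lemma nbrs_univ_eq (hniso : ∀ i, (G.neighborFinset i).Nonempty) :
    nbrs G (Finset.univ : Finset V) = Finset.univ := by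
  apply Finset.eq_univ_of_forall
  intro z
  rw [mem_nbrs_iff]
  obtain ⟨y, hy⟩ := hniso z
  rw [SimpleGraph.mem_neighborFinset] at hy
  exact ⟨y, Finset.mem_univ y, hy.symm⟩

lemma level_eq_filter {m : ℕ} (h1 : 1 ≤ m) (h2 : m ≤ numLevels D r) :
    level D r m = Finset.univ.filter (fun x => lvl D r x = m) := by
  ext x
  simp only [Finset.mem_filter, Finset.mem_univ, true_and]
  exact mem_level_iff_lvl h1 h2

lemma Ht_K_eq_univ : Ht D r (numLevels D r) = Finset.univ := by
  apply Finset.eq_univ_of_forall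
  intro x
  simp only [Ht, Finset.mem_filter, Finset.mem_univ, true_and]
  exact lvl_le x

end Phi

section Fiber

variable {V' : Type*} [Fintype V'] [DecidableEq V']

lemma sum_fiber_le (p : V' → ℕ) (hp : ∀ x, 1 ≤ p x) (k : ℕ) (g : V' → ℝ) :
    ∑ x ∈ Finset.univ.filter (fun x => p x ≤ k), g x
      = ∑ m ∈ Finset.Icc 1 k, ∑ x ∈ Finset.univ.filter (fun x => p x = m), g x := by
  classical
  rw [← Finset.sum_fiberwise_of_maps_to (s := Finset.univ.filter (fun x => p x ≤ k))
    (t := Finset.Icc 1 k) (g := p)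
    (fun x hx => by
      simp only [Finset.mem_filter] at hx
      simp only [Finset.mem_Icc]
      exact ⟨hp x, hx.2⟩) g]
  apply Finset.sum_congr rfl
  intro m hm
  simp only [Finset.mem_Icc] at hm
  apply Finset.sum_congr
  · ext x
    simp only [Finset.mem_filter, Finset.mem_univ, true_and]
    constructor
    · rintro ⟨-, h⟩; exact h
    · intro h; omega
  · intro x _; rfl

lemma sum_fiber_ge (p : V' → ℕ) (K : ℕ) (hp : ∀ x, p x ≤ K) (a : ℕ) (g : V' → ℝ) :
    ∑ x ∈ Finset.univ.filter (fun x => a ≤ p x), g x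
      = ∑ m ∈ Finset.Icc a K, ∑ x ∈ Finset.univ.filter (fun x => p x = m), g x := by
  classical
  rw [← Finset.sum_fiberwise_of_maps_to (s := Finset.univ.filter (fun x => a ≤ p x))
    (t := Finset.Icc a K) (g := p)
    (fun x hx => by
      simp only [Finset.mem_filter] at hx
      simp only [Finset.mem_Icc]
      exact ⟨hx.2, hp x⟩) g]
  apply Finset.sum_congr rfl
  intro m hm
  simp only [Finset.mem_Icc] at hm
  apply Finset.sum_congr
  · ext x
    simp only [Finset.mem_filter, Finset.mem_univ, true_and]
    constructor
    · rintro ⟨-, h⟩; exact h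
    · intro h; omega
  · intro x _; rfl

end Fiber

section SumLevels

variable {G : SimpleGraph V} [DecidableRel G.Adj] {D r : V → ℝ}

lemma sum_level_r (hD : ∀ i, 0 < D i) {m : ℕ} (h1 : 1 ≤ m) (h2 : m ≤ numLevels D r) :
    ∑ x ∈ level D r m, r x = v D r m * ∑ x ∈ level D r m, D x := by
  rw [Finset.mul_sum]
  apply Finset.sum_congr rfl
  intro x hx
  rw [mem_level_iff] at hx
  calc r x = ratio D r x * D x := (ratio_mul_D (hD x)).symm
    _ = v D r m * D x := by rw [hx]

lemma sum_Ht_r (hD : ∀ i, 0 < D i) (k : ℕ) (hk : k ≤ numLevels D r) :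
    ∑ x ∈ Ht D r k, r x = ∑ m ∈ Finset.Icc 1 k, v D r m * ∑ x ∈ level D r m, D x := by
  rw [Ht, sum_fiber_le (lvl D r) one_le_lvl k r]
  apply Finset.sum_congr rfl
  intro m hm
  simp only [Finset.mem_Icc] at hm
  rw [← level_eq_filter hm.1 (le_trans hm.2 hk)]
  exact sum_level_r hD hm.1 (le_trans hm.2 hk)

lemma fS_Ht (hniso : ∀ i, (G.neighborFinset i).Nonempty) (k : ℕ) :
    fS G D (Ht D r k) = ∑ m ∈ Finset.Icc 1 k,
      ∑ z ∈ Finset.univ.filter (fun z => philvl G D r hniso z = m), D z := by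
  rw [fS, nbrs_Ht_eq (hniso := hniso) k,
    sum_fiber_le (philvl G D r hniso) one_le_philvl k D]

/-- Marginal identity: the `D`-mass consumed by level `m` equals `v_m · D(L_m)`. -/
lemma marginal_identity (hniso : ∀ i, (G.neighborFinset i).Nonempty)
    (hD : ∀ i, 0 < D i) (hct : ChainTight G D r)
    {m : ℕ} (h1 : 1 ≤ m) (h2 : m ≤ numLevels D r) :
    ∑ z ∈ Finset.univ.filter (fun z => philvl G D r hniso z = m), D z
      = v D r m * ∑ x ∈ level D r m, D x := by
  have hEq : ∀ k, 1 ≤ k → k ≤ numLevels D r →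
      ∑ j ∈ Finset.Icc 1 k, v D r j * ∑ x ∈ level D r j, D x
        = ∑ j ∈ Finset.Icc 1 k,
            ∑ z ∈ Finset.univ.filter (fun z => philvl G D r hniso z = j), D z := by
    intro k hk1 hkK
    rw [← sum_Ht_r hD k hkK, ← fS_Ht hniso k]
    exact hct k hk1 hkK
  rcases eq_or_lt_of_le h1 with h | h
  · -- m = 1
    subst h
    have := hEq 1 (le_refl 1) h2
    simp only [Finset.Icc_self, Finset.sum_singleton] at this
    exact this.symm
  · -- m ≥ 2
    have hEm := hEq m h1 h2
    have hEm1 := hEq (m - 1) (by omega) (by omega)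
    have hsplit : ∀ g : ℕ → ℝ, ∑ j ∈ Finset.Icc 1 m, g j
        = ∑ j ∈ Finset.Icc 1 (m - 1), g j + g m := by
      intro g
      have hm : m - 1 + 1 = m := by omega
      rw [← hm, Finset.sum_Icc_succ_top (by omega)]
      rw [hm]
    rw [hsplit, hsplit] at hEm
    rw [hEm1] at hEm
    linarith

end SumLevels

end SharingEcon
namespace SharingEcon

section Star

variable {V : Type*} [Fintype V] [DecidableEq V]
variable {G : SimpleGraph V} [DecidableRel G.Adj] {D r : V → ℝ}

lemma Ht_zero : Ht D r 0 = ∅ := by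
  rw [Finset.eq_empty_iff_forall_notMem]
  intro x hx
  simp only [Ht, Finset.mem_filter, Finset.mem_univ, true_and] at hx
  have := one_le_lvl (D := D) (r := r) x
  omega

lemma tight_Ht (hr : r ∈ polyA (fS G D)) (hct : ChainTight G D r)
    {k : ℕ} (hk : k ≤ numLevels D r) :
    ∑ x ∈ Ht D r k, r x = fS G D (Ht D r k) := by
  rcases Nat.eq_zero_or_pos k with rfl | hpos
  · rw [Ht_zero, fS_empty, Finset.sum_empty]
  · exact hct k hpos hk

lemma genDagger (hniso : ∀ i, (G.neighborFinset i).Nonempty)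
    (hD : ∀ i, 0 < D i) (hr : r ∈ polyA (fS G D)) (hct : ChainTight G D r)
    {k : ℕ} (hkK : k ≤ numLevels D r) {T : Finset V}
    (hT : ∀ x ∈ T, k < lvl D r x) :
    ∑ x ∈ T, r x ≤
      ∑ z ∈ (nbrs G T).filter (fun z => k < philvl G D r hniso z), D z := by
  classical
  have hdisj : Disjoint (Ht D r k) T := by
    rw [Finset.disjoint_left]
    intro a ha haT
    simp only [Ht, Finset.mem_filter, Finset.mem_univ, true_and] at ha
    have := hT a haT
    omega
  have hfeas := hr.2 (Ht D r k ∪ T)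
  rw [Finset.sum_union hdisj] at hfeas
  have htight := tight_Ht hr hct hkK
  have hf : fS G D (Ht D r k ∪ T) = fS G D (Ht D r k)
      + ∑ z ∈ (nbrs G T) \ (nbrs G (Ht D r k)), D z := by
    rw [fS, fS, nbrs_union, ← Finset.union_sdiff_self_eq_union,
      Finset.sum_union Finset.disjoint_sdiff]
  have h1 : ∑ x ∈ T, r x ≤ ∑ z ∈ (nbrs G T) \ (nbrs G (Ht D r k)), D z := by
    rw [hf, ← htight] at hfeas
    linarith
  refine le_trans h1 (Finset.sum_le_sum_of_subset_of_nonneg ?_ (fun i _ _ => le_of_lt (hD i)))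
  intro z hz
  rw [Finset.mem_sdiff] at hz
  rw [Finset.mem_filter]
  refine ⟨hz.1, ?_⟩
  have := hz.2
  rw [nbrs_Ht_eq (hniso := hniso) k] at this
  simp only [Finset.mem_filter, Finset.mem_univ, true_and] at this
  omega

lemma v_nonneg (hD : ∀ i, 0 < D i) (hr : r ∈ polyA (fS G D))
    {m : ℕ} (h1 : 1 ≤ m) (h2 : m ≤ numLevels D r) : 0 ≤ v D r m := by
  obtain ⟨i, hi⟩ := level_nonempty (D := D) (r := r) h1 h2
  rw [mem_level_iff] at hi
  rw [← hi]
  exact ratio_nonneg hD hr i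

lemma v_pos (hniso : ∀ i, (G.neighborFinset i).Nonempty)
    (hD : ∀ i, 0 < D i) (hr : r ∈ polyA (fS G D)) (hct : ChainTight G D r)
    {m : ℕ} (h1 : 1 ≤ m) (h2 : m ≤ numLevels D r) : 0 < v D r m := by
  have hK1 : 1 ≤ numLevels D r := le_trans h1 h2
  have hmarg := marginal_identity hniso hD hct (le_refl 1) hK1
  -- some node has philvl = 1
  obtain ⟨i, hi⟩ := level_nonempty (D := D) (r := r) (le_refl 1) hK1
  have hilvl : lvl D r i = 1 := (mem_level_iff_lvl (le_refl 1) hK1).1 hi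
  obtain ⟨y, hy⟩ := hniso i
  rw [SimpleGraph.mem_neighborFinset] at hy
  have hyphi : philvl G D r hniso y = 1 := by
    have hle : philvl G D r hniso y ≤ 1 := by
      have := philvl_le (D := D) (r := r) (hniso := hniso) hy.symm
      omega
    have := one_le_philvl (G := G) (D := D) (r := r) (hniso := hniso) y
    omega
  have hWpos : 0 < ∑ z ∈ Finset.univ.filter
      (fun z => philvl G D r hniso z = 1), D z := by
    have hymem : y ∈ Finset.univ.filter (fun z => philvl G D r hniso z = 1) := by
      simp [hyphi]
    calc (0:ℝ) < D y := hD y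
      _ ≤ _ := Finset.single_le_sum (fun i _ => le_of_lt (hD i)) hymem
  have hLpos : 0 < ∑ x ∈ level D r 1, D x := by
    apply Finset.sum_pos (fun i _ => hD i) ⟨i, hi⟩
  have hv1 : 0 < v D r 1 := by
    rw [hmarg] at hWpos
    by_contra hle
    push_neg at hle
    nlinarith
  calc (0:ℝ) < v D r 1 := hv1
    _ ≤ v D r m := v_le_v (le_refl 1) h1 h2

lemma star_step (hniso : ∀ i, (G.neighborFinset i).Nonempty)
    (hD : ∀ i, 0 < D i) (hr : r ∈ polyA (fS G D)) (hct : ChainTight G D r)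
    {α β : ℕ} (hα1 : 1 ≤ α) (hαK : α ≤ numLevels D r) (hβ1 : 1 ≤ β) :
    v D r α * (∑ x ∈ Finset.univ.filter
        (fun x => α ≤ lvl D r x ∧ β ≤ philvl G D r hniso x), D x)
      ≤ ∑ x ∈ Finset.univ.filter
        (fun x => β ≤ lvl D r x ∧ α ≤ philvl G D r hniso x), D x := by
  classical
  set A := Finset.univ.filter
    (fun x => α ≤ lvl D r x ∧ β ≤ philvl G D r hniso x) with hA
  set B := Finset.univ.filter
    (fun x => β ≤ lvl D r x ∧ α ≤ philvl G D r hniso x) with hB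
  have h1 : v D r α * ∑ x ∈ A, D x ≤ ∑ x ∈ A, r x := by
    rw [Finset.mul_sum]
    apply Finset.sum_le_sum
    intro x hx
    simp only [hA, Finset.mem_filter, Finset.mem_univ, true_and] at hx
    calc v D r α * D x ≤ v D r (lvl D r x) * D x := by
          apply mul_le_mul_of_nonneg_right (v_le_v hα1 hx.1 (lvl_le x)) (le_of_lt (hD x))
      _ = ratio D r x * D x := by rw [v_lvl_eq_ratio]
      _ = r x := ratio_mul_D (hD x)
  have h2 : ∑ x ∈ A, r x ≤
      ∑ z ∈ (nbrs G A).filter (fun z => α - 1 < philvl G D r hniso z), D z := by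
    apply genDagger hniso hD hr hct (by omega : α - 1 ≤ numLevels D r)
    intro x hx
    simp only [hA, Finset.mem_filter, Finset.mem_univ, true_and] at hx
    omega
  have h3 : (nbrs G A).filter (fun z => α - 1 < philvl G D r hniso z) ⊆ B := by
    intro z hz
    rw [Finset.mem_filter] at hz
    obtain ⟨hz1, hz2⟩ := hz
    rw [mem_nbrs_iff] at hz1
    obtain ⟨x, hxA, hadj⟩ := hz1
    simp only [hA, Finset.mem_filter, Finset.mem_univ, true_and] at hxA
    simp only [hB, Finset.mem_filter, Finset.mem_univ, true_and]
    constructor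
    · calc β ≤ philvl G D r hniso x := hxA.2
        _ ≤ lvl D r z := philvl_le hadj
    · omega
  have h4 : ∑ z ∈ (nbrs G A).filter (fun z => α - 1 < philvl G D r hniso z), D z
      ≤ ∑ x ∈ B, D x :=
    Finset.sum_le_sum_of_subset_of_nonneg h3 (fun i _ _ => le_of_lt (hD i))
  linarith

/-- The key two-set inequality: if some node has level ≥ α and min-neighbor-level ≥ β,
then `v α * v β ≤ 1`. -/
lemma star (hniso : ∀ i, (G.neighborFinset i).Nonempty)
    (hD : ∀ i, 0 < D i) (hr : r ∈ polyA (fS G D)) (hct : ChainTight G D r)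
    {α β : ℕ} (hα1 : 1 ≤ α) (hαK : α ≤ numLevels D r) (hβ1 : 1 ≤ β) (hβK : β ≤ numLevels D r)
    {j : V} (hjl : α ≤ lvl D r j) (hjp : β ≤ philvl G D r hniso j) :
    v D r α * v D r β ≤ 1 := by
  classical
  set A := Finset.univ.filter
    (fun x => α ≤ lvl D r x ∧ β ≤ philvl G D r hniso x) with hA
  set B := Finset.univ.filter
    (fun x => β ≤ lvl D r x ∧ α ≤ philvl G D r hniso x) with hB
  have hs1 : v D r α * ∑ x ∈ A, D x ≤ ∑ x ∈ B, D x :=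
    star_step hniso hD hr hct hα1 hαK hβ1
  have hs2 : v D r β * ∑ x ∈ B, D x ≤ ∑ x ∈ A, D x :=
    star_step hniso hD hr hct hβ1 hβK hα1
  have hApos : 0 < ∑ x ∈ A, D x := by
    apply Finset.sum_pos (fun i _ => hD i)
    exact ⟨j, by simp [hA, hjl, hjp]⟩
  have hva : 0 < v D r α := v_pos hniso hD hr hct hα1 hαK
  have hvb : 0 < v D r β := v_pos hniso hD hr hct hβ1 hβK
  nlinarith

/-- Every node satisfies `v_{lvl j} · v_{φ j} = 1`. -/
lemma product_one (hniso : ∀ i, (G.neighborFinset i).Nonempty)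
    (hD : ∀ i, 0 < D i) (hr : r ∈ polyA (fS G D)) (hct : ChainTight G D r)
    (x : V) : v D r (lvl D r x) * v D r (philvl G D r hniso x) = 1 := by
  classical
  have hNe : Nonempty V := ⟨x⟩
  have hK1 : 1 ≤ numLevels D r := numLevels_pos
  set K := numLevels D r with hK
  -- pointwise ≤ 1
  have hle : ∀ y : V, v D r (lvl D r y) * v D r (philvl G D r hniso y) ≤ 1 := by
    intro y
    exact star hniso hD hr hct (one_le_lvl y) (lvl_le y)
      (one_le_philvl y) (philvl_le_K y) (le_refl _) (le_refl _)
  -- total sums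
  have htot : ∑ y, r y = ∑ y, D y := by
    have h := hct K hK1 (le_refl K)
    rw [Ht_K_eq_univ] at h
    rw [h, fS, nbrs_univ_eq hniso]
  have hsum_r : ∑ y, r y = ∑ y, v D r (lvl D r y) * D y := by
    apply Finset.sum_congr rfl
    intro y _
    rw [v_lvl_eq_ratio]
    exact (ratio_mul_D (hD y)).symm
  -- ∑ D y / v (φ y) = ∑ D y
  have hWfib : ∀ m, 1 ≤ m → m ≤ K →
      ∑ z ∈ Finset.univ.filter (fun z => philvl G D r hniso z = m), D z
        = v D r m * ∑ x ∈ level D r m, D x := fun m h1 h2 =>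
    marginal_identity hniso hD hct h1 h2
  have hdiv : ∑ y, D y / v D r (philvl G D r hniso y) = ∑ y, D y := by
    have huniv1 : (Finset.univ : Finset V) =
        Finset.univ.filter (fun y => philvl G D r hniso y ≤ K) := by
      symm
      apply Finset.filter_true_of_mem
      intro y _
      exact philvl_le_K y
    have huniv2 : (Finset.univ : Finset V) =
        Finset.univ.filter (fun y => lvl D r y ≤ K) := by
      symm
      apply Finset.filter_true_of_mem
      intro y _
      exact lvl_le y
    calc ∑ y, D y / v D r (philvl G D r hniso y)
        = ∑ y ∈ Finset.univ.filter (fun y => philvl G D r hniso y ≤ K),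
            D y / v D r (philvl G D r hniso y) := by rw [← huniv1]
      _ = ∑ m ∈ Finset.Icc 1 K, ∑ y ∈ Finset.univ.filter
            (fun y => philvl G D r hniso y = m), D y / v D r (philvl G D r hniso y) :=
          sum_fiber_le _ one_le_philvl K _
      _ = ∑ m ∈ Finset.Icc 1 K, ∑ x ∈ level D r m, D x := by
          apply Finset.sum_congr rfl
          intro m hm
          rw [Finset.mem_Icc] at hm
          have hvm : v D r m ≠ 0 := ne_of_gt (v_pos hniso hD hr hct hm.1 hm.2)
          have : ∑ y ∈ Finset.univ.filter (fun y => philvl G D r hniso y = m),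
              D y / v D r (philvl G D r hniso y)
              = ∑ y ∈ Finset.univ.filter (fun y => philvl G D r hniso y = m),
                  D y / v D r m := by
            apply Finset.sum_congr rfl
            intro y hy
            rw [Finset.mem_filter] at hy
            rw [hy.2]
          rw [this, ← Finset.sum_div, hWfib m hm.1 hm.2]
          field_simp
      _ = ∑ m ∈ Finset.Icc 1 K, ∑ x ∈ Finset.univ.filter
            (fun x => lvl D r x = m), D x := by
          apply Finset.sum_congr rfl
          intro m hm
          rw [Finset.mem_Icc] at hm
          rw [level_eq_filter hm.1 hm.2]
      _ = ∑ y ∈ Finset.univ.filter (fun y => lvl D r y ≤ K), D y :=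
          (sum_fiber_le _ one_le_lvl K _).symm
      _ = ∑ y, D y := by rw [← huniv2]
  -- the gap function
  set gap : V → ℝ := fun y =>
    D y / v D r (philvl G D r hniso y) - v D r (lvl D r y) * D y with hgap
  have hgap_nonneg : ∀ y ∈ Finset.univ, 0 ≤ gap y := by
    intro y _
    simp only [hgap]
    have hvp : 0 < v D r (philvl G D r hniso y) :=
      v_pos hniso hD hr hct (one_le_philvl y) (philvl_le_K y)
    rw [sub_nonneg, le_div_iff₀ hvp]
    have := hle y
    nlinarith [le_of_lt (hD y)]
  have hgap_sum : ∑ y, gap y = 0 := by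
    simp only [hgap]
    rw [Finset.sum_sub_distrib, hdiv, ← hsum_r, htot]
    ring
  have hzero : ∀ y ∈ Finset.univ, gap y = 0 :=
    (Finset.sum_eq_zero_iff_of_nonneg hgap_nonneg).1 hgap_sum
  have hx0 : D x / v D r (philvl G D r hniso x) - v D r (lvl D r x) * D x = 0 := by
    simpa [hgap] using hzero x (Finset.mem_univ x)
  have hvp : 0 < v D r (philvl G D r hniso x) :=
    v_pos hniso hD hr hct (one_le_philvl x) (philvl_le_K x)
  have hDx : D x ≠ 0 := ne_of_gt (hD x)
  have h1 : D x / v D r (philvl G D r hniso x) = v D r (lvl D r x) * D x := by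
    linarith
  have h1' : D x = v D r (lvl D r x) * D x * v D r (philvl G D r hniso x) :=
    (div_eq_iff (ne_of_gt hvp)).1 h1
  have h2 : D x * (v D r (lvl D r x) * v D r (philvl G D r hniso x)) = D x * 1 := by
    rw [mul_one]
    linear_combination -h1'
  exact mul_left_cancel₀ hDx h2

end Star

end SharingEcon
namespace SharingEcon

section Pairing

variable {V : Type*} [Fintype V] [DecidableEq V]
variable {G : SimpleGraph V} [DecidableRel G.Adj] {D r : V → ℝ}

lemma pairing (hniso : ∀ i, (G.neighborFinset i).Nonempty)
    (hD : ∀ i, 0 < D i) (hr : r ∈ polyA (fS G D)) (hct : ChainTight G D r)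
    (x : V) : lvl D r x + philvl G D r hniso x = numLevels D r + 1 := by
  classical
  have hanti : ∀ a b : V, lvl D r a < lvl D r b →
      philvl G D r hniso b < philvl G D r hniso a := by
    intro a b h
    by_contra h'
    push_neg at h'
    have h1 := product_one hniso hD hr hct a
    have h2 := product_one hniso hD hr hct b
    have hva : v D r (lvl D r a) < v D r (lvl D r b) :=
      v_lt_v (one_le_lvl a) h (lvl_le b)
    have hphile : v D r (philvl G D r hniso a) ≤ v D r (philvl G D r hniso b) :=
      v_le_v (one_le_philvl a) h' (philvl_le_K b)
    have hva_pos : 0 < v D r (lvl D r a) :=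
      v_pos hniso hD hr hct (one_le_lvl a) (lvl_le a)
    have hphib_pos : 0 < v D r (philvl G D r hniso b) :=
      v_pos hniso hD hr hct (one_le_philvl b) (philvl_le_K b)
    have hstep1 : v D r (lvl D r a) * v D r (philvl G D r hniso a)
        ≤ v D r (lvl D r a) * v D r (philvl G D r hniso b) :=
      mul_le_mul_of_nonneg_left hphile (le_of_lt hva_pos)
    have hstep2 : v D r (lvl D r a) * v D r (philvl G D r hniso b)
        < v D r (lvl D r b) * v D r (philvl G D r hniso b) :=
      mul_lt_mul_of_pos_right hva hphib_pos
    linarith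
  have hlow : ∀ d : ℕ, ∀ y : V, lvl D r y + d = numLevels D r →
      d + 1 ≤ philvl G D r hniso y := by
    intro d
    induction d with
    | zero => intro y _; exact one_le_philvl y
    | succ d IH =>
      intro y hy
      have hylvl := one_le_lvl (D := D) (r := r) y
      obtain ⟨z, hz⟩ := level_nonempty (D := D) (r := r)
        (show 1 ≤ lvl D r y + 1 by omega) (show lvl D r y + 1 ≤ numLevels D r by omega)
      have hzl : lvl D r z = lvl D r y + 1 :=
        (mem_level_iff_lvl (by omega) (by omega)).1 hz
      have hIH := IH z (by omega)
      have := hanti y z (by omega)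
      omega
  have hup : ∀ d : ℕ, ∀ y : V, lvl D r y = d + 1 →
      philvl G D r hniso y + d ≤ numLevels D r := by
    intro d
    induction d with
    | zero =>
      intro y _
      simpa using philvl_le_K (G := G) (D := D) (r := r) (hniso := hniso) y
    | succ d IH =>
      intro y hy
      have hyK := lvl_le (D := D) (r := r) y
      obtain ⟨z, hz⟩ := level_nonempty (D := D) (r := r)
        (show 1 ≤ d + 1 by omega) (show d + 1 ≤ numLevels D r by omega)
      have hzl : lvl D r z = d + 1 :=
        (mem_level_iff_lvl (by omega) (by omega)).1 hz
      have hIH := IH z hzl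
      have := hanti z y (by omega)
      omega
  have h1 := hlow (numLevels D r - lvl D r x) x (by
    have := lvl_le (D := D) (r := r) x
    omega)
  have h2 := hup (lvl D r x - 1) x (by
    have := one_le_lvl (D := D) (r := r) x
    omega)
  have h3 := one_le_lvl (D := D) (r := r) x
  have h4 := lvl_le (D := D) (r := r) x
  have h5 := one_le_philvl (G := G) (D := D) (r := r) (hniso := hniso) x
  omega

end Pairing

end SharingEcon
namespace SharingEcon

section CondOfChain

variable {V : Type*} [Fintype V] [DecidableEq V]
variable {G : SimpleGraph V} [DecidableRel G.Adj] {D r : V → ℝ}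

theorem conditions_of_chainTight (hniso : ∀ i, (G.neighborFinset i).Nonempty)
    (hD : ∀ i, 0 < D i) (hr : r ∈ polyA (fS G D)) (hct : ChainTight G D r) :
    (numLevels D r = 1 → v D r 1 = 1) ∧
      (2 ≤ numLevels D r →
        (∀ k : ℕ, 1 ≤ k → k ≤ numLevels D r / 2 →
          (∀ i ∈ level D r k, ∀ j ∈ level D r k, ¬ G.Adj i j) ∧
          level D r (numLevels D r - k + 1) =
            (Qset D r k).filter (fun j => ∃ i ∈ level D r k, G.Adj i j) ∧
          v D r k * v D r (numLevels D r - k + 1) = 1 ∧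
          ∑ i ∈ level D r k, r i = ∑ i ∈ level D r (numLevels D r - k + 1), D i) ∧
        (Odd (numLevels D r) → v D r ((numLevels D r + 1) / 2) = 1)) := by
  classical
  constructor
  · -- K = 1
    intro hK1
    obtain ⟨x, hx⟩ := level_nonempty (D := D) (r := r) (le_refl 1) (by omega)
    have hxl : lvl D r x = 1 := (mem_level_iff_lvl (le_refl 1) (by omega)).1 hx
    have hpair := pairing hniso hD hr hct x
    have hprod := product_one hniso hD hr hct x
    have hphix : philvl G D r hniso x = 1 := by omega
    rw [hxl, hphix] at hprod
    have hpos : 0 < v D r 1 := v_pos hniso hD hr hct (le_refl 1) (by omega)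
    nlinarith
  · intro hK2
    constructor
    · intro k hk1 hk2
      have h2k : 2 * k ≤ numLevels D r := by omega
      have hkK : k ≤ numLevels D r := by omega
      have hmk1 : 1 ≤ numLevels D r - k + 1 := by omega
      have hmkK : numLevels D r - k + 1 ≤ numLevels D r := by omega
      refine ⟨?_, ?_, ?_, ?_⟩
      · -- independence
        intro i hi j hj hadj
        have hil : lvl D r i = k := (mem_level_iff_lvl hk1 hkK).1 hi
        have hjl : lvl D r j = k := (mem_level_iff_lvl hk1 hkK).1 hj
        have hphi : philvl G D r hniso i ≤ lvl D r j := philvl_le hadj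
        have hpair := pairing hniso hD hr hct i
        omega
      · -- level (K-k+1) = neighbors of level k within Qset
        ext z
        simp only [Finset.mem_filter]
        constructor
        · intro hz
          have hzl : lvl D r z = numLevels D r - k + 1 :=
            (mem_level_iff_lvl hmk1 hmkK).1 hz
          have hpairz := pairing hniso hD hr hct z
          have hphz : philvl G D r hniso z = k := by omega
          refine ⟨?_, ?_⟩
          · -- z ∈ Qset
            simp only [Qset, Finset.mem_sdiff, Finset.mem_univ, true_and,
              Finset.mem_biUnion]
            rintro ⟨m, hm, hmem⟩
            rw [Finset.mem_Icc] at hm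
            rcases Finset.mem_union.1 hmem with h | h
            · have : lvl D r z = m := (mem_level_iff_lvl (by omega) (by omega)).1 h
              omega
            · have : lvl D r z = numLevels D r - m + 1 :=
                (mem_level_iff_lvl (by omega) (by omega)).1 h
              omega
          · obtain ⟨x, hadj, hval⟩ :=
              exists_philvl (D := D) (r := r) (hniso := hniso) z
            refine ⟨x, ?_, hadj.symm⟩
            rw [mem_level_iff_lvl hk1 hkK]
            omega
        · rintro ⟨hzQ, i, hi, hadj⟩
          have hil : lvl D r i = k := (mem_level_iff_lvl hk1 hkK).1 hi
          have hpairi := pairing hniso hD hr hct i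
          have hphii : philvl G D r hniso i = numLevels D r + 1 - k := by omega
          have hlvlz : numLevels D r + 1 - k ≤ lvl D r z := by
            have := philvl_le (D := D) (r := r) (hniso := hniso) hadj
            omega
          have hzK := lvl_le (D := D) (r := r) z
          -- z cannot be in a removed top level
          have hzle : lvl D r z ≤ numLevels D r - k + 1 := by
            by_contra hgt
            push_neg at hgt
            set m := numLevels D r + 1 - lvl D r z with hm
            have hm1 : 1 ≤ m := by omega
            have hm2 : m ≤ k - 1 := by omega
            simp only [Qset, Finset.mem_sdiff, Finset.mem_univ, true_and,
              Finset.mem_biUnion] at hzQ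
            apply hzQ
            refine ⟨m, Finset.mem_Icc.2 ⟨hm1, hm2⟩, ?_⟩
            apply Finset.mem_union_right
            rw [mem_level_iff_lvl (by omega) (by omega)]
            omega
          rw [mem_level_iff_lvl hmk1 hmkK]
          omega
      · -- product = 1
        obtain ⟨i, hi⟩ := level_nonempty (D := D) (r := r) hk1 hkK
        have hil : lvl D r i = k := (mem_level_iff_lvl hk1 hkK).1 hi
        have hpairi := pairing hniso hD hr hct i
        have hprod := product_one hniso hD hr hct i
        have hphii : philvl G D r hniso i = numLevels D r - k + 1 := by omega
        rw [hil, hphii] at hprod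
        exact hprod
      · -- sums
        rw [sum_level_r hD hk1 hkK, ← marginal_identity hniso hD hct hk1 hkK]
        apply Finset.sum_congr
        · ext z
          simp only [Finset.mem_filter, Finset.mem_univ, true_and]
          rw [mem_level_iff_lvl hmk1 hmkK]
          have hpairz := pairing hniso hD hr hct z
          have h1 := one_le_lvl (D := D) (r := r) z
          have h2 := lvl_le (D := D) (r := r) z
          have h3 := one_le_philvl (G := G) (D := D) (r := r) (hniso := hniso) z
          have h4 := philvl_le_K (G := G) (D := D) (r := r) (hniso := hniso) z
          omega
        · intro x _; rfl
    · -- odd middle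
      intro hodd
      obtain ⟨t, ht⟩ := hodd
      have hm1 : 1 ≤ (numLevels D r + 1) / 2 := by omega
      have hmK : (numLevels D r + 1) / 2 ≤ numLevels D r := by omega
      obtain ⟨i, hi⟩ := level_nonempty (D := D) (r := r) hm1 hmK
      have hil : lvl D r i = (numLevels D r + 1) / 2 :=
        (mem_level_iff_lvl hm1 hmK).1 hi
      have hpairi := pairing hniso hD hr hct i
      have hprod := product_one hniso hD hr hct i
      have hphii : philvl G D r hniso i = (numLevels D r + 1) / 2 := by omega
      rw [hil, hphii] at hprod
      have hpos : 0 < v D r ((numLevels D r + 1) / 2) :=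
        v_pos hniso hD hr hct hm1 hmK
      nlinarith

end CondOfChain

end SharingEcon
namespace SharingEcon

section ChainOfCond

variable {V : Type*} [Fintype V] [DecidableEq V]
variable {G : SimpleGraph V} [DecidableRel G.Adj] {D r : V → ℝ}

theorem chainTight_of_conditions (hniso : ∀ i, (G.neighborFinset i).Nonempty)
    (hD : ∀ i, 0 < D i) (hr : r ∈ polyA (fS G D))
    (hcond : (numLevels D r = 1 → v D r 1 = 1) ∧
      (2 ≤ numLevels D r →
        (∀ k : ℕ, 1 ≤ k → k ≤ numLevels D r / 2 →
          (∀ i ∈ level D r k, ∀ j ∈ level D r k, ¬ G.Adj i j) ∧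
          level D r (numLevels D r - k + 1) =
            (Qset D r k).filter (fun j => ∃ i ∈ level D r k, G.Adj i j) ∧
          v D r k * v D r (numLevels D r - k + 1) = 1 ∧
          ∑ i ∈ level D r k, r i = ∑ i ∈ level D r (numLevels D r - k + 1), D i) ∧
        (Odd (numLevels D r) → v D r ((numLevels D r + 1) / 2) = 1))) :
    ChainTight G D r := by
  classical
  intro k hk1 hkK
  have hK1 : 1 ≤ numLevels D r := le_trans hk1 hkK
  rcases eq_or_lt_of_le hK1 with hKeq | hK2
  · -- K = 1
    have hK : numLevels D r = 1 := hKeq.symm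
    have hk : k = 1 := by omega
    subst hk
    have hv1 := hcond.1 hK
    have hHt : Ht D r 1 = Finset.univ := by
      apply Finset.eq_univ_of_forall
      intro x
      simp only [Ht, Finset.mem_filter, Finset.mem_univ, true_and]
      have := lvl_le (D := D) (r := r) x
      omega
    rw [hHt, fS, nbrs_univ_eq hniso]
    apply Finset.sum_congr rfl
    intro x _
    have h1 := one_le_lvl (D := D) (r := r) x
    have h2 := lvl_le (D := D) (r := r) x
    have hxl : lvl D r x = 1 := by omega
    calc r x = ratio D r x * D x := (ratio_mul_D (hD x)).symm
      _ = v D r (lvl D r x) * D x := by rw [v_lvl_eq_ratio]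
      _ = v D r 1 * D x := by rw [hxl]
      _ = D x := by rw [hv1, one_mul]
  · -- K ≥ 2
    have hC := hcond.2 hK2
    have hS1 : ∀ m, 1 ≤ m → m ≤ numLevels D r →
        ∑ x ∈ level D r m, r x = ∑ x ∈ level D r (numLevels D r - m + 1), D x := by
      intro m hm1 hmK
      by_cases hcase1 : 2 * m ≤ numLevels D r
      · exact (hC.1 m hm1 (by omega)).2.2.2
      · by_cases hcase2 : 2 * m = numLevels D r + 1
        · have hodd : Odd (numLevels D r) := by
            rw [Nat.odd_iff]; omega
          have hv := hC.2 hodd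
          have hmm : (numLevels D r + 1) / 2 = m := by omega
          rw [hmm] at hv
          have hKm : numLevels D r - m + 1 = m := by omega
          rw [hKm, sum_level_r hD hm1 hmK, hv, one_mul]
        · -- top half
          set k' := numLevels D r - m + 1 with hk'
          have hk'1 : 1 ≤ k' := by omega
          have hk'2 : k' ≤ numLevels D r / 2 := by omega
          have hk'K : k' ≤ numLevels D r := by omega
          obtain ⟨-, -, hprod, hsum⟩ := hC.1 k' hk'1 hk'2
          have hm' : numLevels D r - k' + 1 = m := by omega
          rw [hm'] at hprod hsum
          rw [sum_level_r hD hm1 hmK]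
          rw [sum_level_r hD hk'1 hk'K] at hsum
          calc v D r m * ∑ x ∈ level D r m, D x
              = v D r m * (v D r k' * ∑ x ∈ level D r k', D x) := by rw [hsum]
            _ = (v D r k' * v D r m) * ∑ x ∈ level D r k', D x := by ring
            _ = ∑ x ∈ level D r k', D x := by rw [hprod, one_mul]
    have hS2 : ∀ m, ∀ i j : V, lvl D r i = m → G.Adj i j →
        2 * m ≤ numLevels D r → numLevels D r + 1 - m ≤ lvl D r j := by
      intro m
      induction m using Nat.strong_induction_on with
      | _ m IH =>
        intro i j hm hadj h2m
        have hm1 : 1 ≤ m := by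
          rw [← hm]; exact one_le_lvl i
        have hjK := lvl_le (D := D) (r := r) j
        have hj1 := one_le_lvl (D := D) (r := r) j
        rcases Nat.lt_or_ge (lvl D r j) m with hb | hb
        · have := IH (lvl D r j) hb j i rfl hadj.symm (by omega)
          omega
        · by_contra hlt
          push_neg at hlt
          have hQ : j ∈ Qset D r m := by
            simp only [Qset, Finset.mem_sdiff, Finset.mem_univ, true_and,
              Finset.mem_biUnion]
            rintro ⟨m', hm', hmem⟩
            rw [Finset.mem_Icc] at hm'
            rcases Finset.mem_union.1 hmem with h | h
            · have : lvl D r j = m' := (mem_level_iff_lvl (by omega) (by omega)).1 h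
              omega
            · have : lvl D r j = numLevels D r - m' + 1 :=
                (mem_level_iff_lvl (by omega) (by omega)).1 h
              omega
          obtain ⟨-, hlev, -, -⟩ := hC.1 m hm1 (by omega)
          have hmem2 : j ∈ level D r (numLevels D r - m + 1) := by
            rw [hlev, Finset.mem_filter]
            exact ⟨hQ, i, (mem_level_iff_lvl hm1 (by omega)).2 hm, hadj⟩
          have := (mem_level_iff_lvl (by omega) (by omega)).1 hmem2
          omega
    have hsub : nbrs G (Ht D r k) ⊆
        Finset.univ.filter (fun z => numLevels D r + 1 - k ≤ lvl D r z) := by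
      intro z hz
      rw [mem_nbrs_iff] at hz
      obtain ⟨i, hi, hadj⟩ := hz
      simp only [Ht, Finset.mem_filter, Finset.mem_univ, true_and] at hi
      simp only [Finset.mem_filter, Finset.mem_univ, true_and]
      have hi1 := one_le_lvl (D := D) (r := r) i
      have hiK := lvl_le (D := D) (r := r) i
      have hz1 := one_le_lvl (D := D) (r := r) z
      have hzK := lvl_le (D := D) (r := r) z
      by_cases h1 : 2 * lvl D r i ≤ numLevels D r
      · have := hS2 (lvl D r i) i z rfl hadj h1
        omega
      · by_cases h2 : 2 * lvl D r z ≤ numLevels D r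
        · have := hS2 (lvl D r z) z i rfl hadj.symm h2
          omega
        · omega
    have hUt : ∑ z ∈ Finset.univ.filter
          (fun z => numLevels D r + 1 - k ≤ lvl D r z), D z
        = ∑ x ∈ Ht D r k, r x := by
      rw [sum_fiber_ge (lvl D r) (numLevels D r) lvl_le _ D, sum_Ht_r hD k hkK]
      apply Finset.sum_nbij' (i := fun m => numLevels D r + 1 - m)
        (j := fun m => numLevels D r + 1 - m)
      · intro a ha
        rw [Finset.mem_Icc] at ha ⊢
        omega
      · intro a ha
        rw [Finset.mem_Icc] at ha ⊢
        omega
      · intro a ha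
        rw [Finset.mem_Icc] at ha
        omega
      · intro a ha
        rw [Finset.mem_Icc] at ha
        omega
      · intro m hm
        rw [Finset.mem_Icc] at hm
        have hm'1 : 1 ≤ numLevels D r + 1 - m := by omega
        have hm'K : numLevels D r + 1 - m ≤ numLevels D r := by omega
        rw [← level_eq_filter (by omega) (by omega)]
        rw [← sum_level_r hD hm'1 hm'K]
        rw [hS1 (numLevels D r + 1 - m) hm'1 hm'K]
        have : numLevels D r - (numLevels D r + 1 - m) + 1 = m := by omega
        rw [this]
    have hfeas := hr.2 (Ht D r k)
    have hup : fS G D (Ht D r k) ≤ ∑ x ∈ Ht D r k, r x := by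
      rw [fS]
      calc ∑ j ∈ nbrs G (Ht D r k), D j
          ≤ ∑ z ∈ Finset.univ.filter
              (fun z => numLevels D r + 1 - k ≤ lvl D r z), D z :=
            Finset.sum_le_sum_of_subset_of_nonneg hsub (fun i _ _ => le_of_lt (hD i))
        _ = ∑ x ∈ Ht D r k, r x := hUt
    exact le_antisymm hfeas hup

end ChainOfCond

end SharingEcon
namespace SharingEcon

/-- structure theorem for the lex-optimal vector: `r ∈ A` is lex-optimal iff:
if `K = 1` then `v_1 = 1`; and if `K ≥ 2`, then for every `1 ≤ k ≤ ⌊K/2⌋`: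
(1) `L_k` is independent in the induced subgraph `G_{Q_k}` (no two of its nodes are adjacent);
(2) `L_{K−k+1}` is exactly the set of neighbors of `L_k` within `G_{Q_k}`;
(3) `v_k · v_{K−k+1} = 1`;
(4) `Σ_{i∈L_k} r_i = Σ_{i∈L_{K−k+1}} D_i`;
and (5) if `K` is odd then `v_{⌈K/2⌉} = 1`. -/
theorem lexopt_structure {V : Type*} [Fintype V] [DecidableEq V]
    (G : SimpleGraph V) [DecidableRel G.Adj]
    (hconn : G.Connected) (hniso : ∀ i, (G.neighborFinset i).Nonempty)
    (D : V → ℝ) (hD : ∀ i, 0 < D i)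
    (r : V → ℝ) (hr : r ∈ polyA (fS G D)) :
    LexOptimal (polyA (fS G D)) D r ↔
      ((numLevels D r = 1 → v D r 1 = 1) ∧
        (2 ≤ numLevels D r →
          (∀ k : ℕ, 1 ≤ k → k ≤ numLevels D r / 2 →
            (∀ i ∈ level D r k, ∀ j ∈ level D r k, ¬ G.Adj i j) ∧
            level D r (numLevels D r - k + 1) =
              (Qset D r k).filter (fun j => ∃ i ∈ level D r k, G.Adj i j) ∧
            v D r k * v D r (numLevels D r - k + 1) = 1 ∧
            ∑ i ∈ level D r k, r i = ∑ i ∈ level D r (numLevels D r - k + 1), D i) ∧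
          (Odd (numLevels D r) → v D r ((numLevels D r + 1) / 2) = 1))) := by
  constructor
  · intro hlex
    exact conditions_of_chainTight hniso hD hr (chainTight_of_lexopt hD hlex)
  · intro hcond
    exact lexopt_of_chainTight hD hr (chainTight_of_conditions hniso hD hr hcond)

end SharingEcon
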